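/- arXiv:1601.02267 — 12 statements merged into one kernel-verified Lean document; each statement's English description precedes it below -/
import Mathlib

section
/- Let G be a connected graph, c a proper t-vertex coloring of G with colors in Z_t (t ≥ 1), v a vertex of G, and T a spanning tree of G. Then there exists an edge coloring s : E(G) → Z_t with s(e) = 0 for all e ∈ E(G) \ E(T) such that for every vertex u ≠ v, Σ_{e ∈ E_u} s(e) = c(u) in Z_t. -/
/-!
Root the spanning tree `T` at `v`. Every vertex `u ≠ v` has exactly one neighbour in `T` closer
to `v` (its parent), and all its other tree neighbours are its children. Working from the leaves
towards the root, give the edge from `u` to its parent the value `c u` minus the values already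
placed on the edges from `u` to its children; every other edge gets `0`. Then the sum at each
`u ≠ v` is `c u`, and only at the root is there no parent edge to absorb the discrepancy.
-/

open Finset

-- The vertex label induced by an edge coloring: `twinLabel G s v = Σ_{e ∈ E_v} s e` in `ZMod k`.
open scoped Classical in
noncomputable def twinLabel {V : Type*} [Fintype V] (G : SimpleGraph V) {k : ℕ}
    (s : Sym2 V → ZMod k) (v : V) : ZMod k :=
  ∑ e ∈ G.incidenceFinset v, s e

/-- `s` is an improper twin `k`-edge coloring of `G`: the induced vertex labeling
is a proper vertex coloring. -/
def IsImproperTwin {V : Type*} [Fintype V] (G : SimpleGraph V) (k : ℕ)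
    (s : Sym2 V → ZMod k) : Prop :=
  ∀ ⦃u v : V⦄, G.Adj u v → twinLabel G s u ≠ twinLabel G s v

/-- The improper twin chromatic index: the least `k ≥ 2` admitting an improper twin
`k`-edge coloring. -/
noncomputable def improperTwinIndex {V : Type*} [Fintype V] (G : SimpleGraph V) : ℕ :=
  sInf {k | 2 ≤ k ∧ ∃ s : Sym2 V → ZMod k, IsImproperTwin G k s}

namespace SimpleGraph

variable {V : Type*} {T : SimpleGraph V} {r u : V}

theorem IsTree.existsUnique_parent (hT : T.IsTree) (hu : u ≠ r) :
    ∃! w, T.Adj u w ∧ T.dist r u = T.dist r w + 1 := by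
  obtain ⟨p, hp⟩ := (hT.connected r u).exists_walk_length_eq_dist
  have hpn : ¬p.Nil := fun h => hu h.eq.symm
  refine ⟨p.penultimate, ⟨(p.adj_penultimate hpn).symm, ?_⟩, ?_⟩
  · have hle := dist_le p.dropLast
    have hlen := p.length_dropLast_add_one hpn
    have hcases := hT.dist_eq_dist_add_one_of_adj r (p.adj_penultimate hpn)
    omega
  · rintro w ⟨hadj, hw⟩
    obtain ⟨q, hq⟩ := (hT.connected r w).exists_walk_length_eq_dist
    have hqp : (q.concat hadj.symm).IsPath :=
      (q.concat hadj.symm).isPath_of_length_eq_dist (by simp [hq, hw])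
    have hpp : p.IsPath := p.isPath_of_length_eq_dist hp
    have hpen := congrArg (fun x : T.Path r u => x.1.penultimate)
      ((hT.isAcyclic.subsingleton_path r u).elim ⟨_, hqp⟩ ⟨p, hpp⟩)
    simpa using hpen

theorem dist_lt_card [Fintype V] (G : SimpleGraph V) (u v : V) : G.dist u v < Fintype.card V := by
  by_cases h : G.Reachable u v
  · obtain ⟨p, hp, hl⟩ := h.exists_path_of_dist
    exact hl ▸ hp.length_lt
  · rw [dist_eq_zero_of_not_reachable h]
    exact Fintype.card_pos_iff.mpr ⟨u⟩

section IncidenceSums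

variable {M : Type*} [AddCommMonoid M] [DecidableEq V]

theorem sum_incidenceFinset_eq_sum_neighborFinset (G : SimpleGraph V) [Fintype (G.neighborSet u)]
    (f : Sym2 V → M) :
    ∑ e ∈ G.incidenceFinset u, f e = ∑ w ∈ G.neighborFinset u, f s(u, w) := by
  refine (sum_nbij (s(u, ·)) (fun w hw => ?_) (fun _ _ _ _ h => Sym2.congr_right.mp h)
    (fun e he => ?_) (fun _ _ => rfl)).symm
  · simpa using hw
  · obtain ⟨he, hue⟩ := (G.mem_incidenceFinset u e).mp he
    refine ⟨Sym2.Mem.other hue, ?_, Sym2.other_spec hue⟩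
    rw [mem_coe, mem_neighborFinset, ← mem_incidenceSet, Sym2.other_spec hue]
    exact ⟨he, hue⟩

theorem sum_incidenceFinset_eq_of_le {G : SimpleGraph V} [Fintype (G.neighborSet u)]
    [Fintype (T.neighborSet u)] (hle : T ≤ G) {f : Sym2 V → M} (hf : ∀ e ∉ T.edgeSet, f e = 0) :
    ∑ e ∈ G.incidenceFinset u, f e = ∑ e ∈ T.incidenceFinset u, f e := by
  refine (sum_subset (fun e he => ?_) fun e he heT => hf e fun he' => heT ?_).symm
  · simp only [mem_incidenceFinset] at he ⊢
    exact ⟨edgeSet_mono hle he.1, he.2⟩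
  · simp only [mem_incidenceFinset] at he ⊢
    exact ⟨he', he.2⟩

end IncidenceSums

section RootedTree

variable [Fintype V] [DecidableRel T.Adj] {R : Type*} [AddCommGroup R]

variable (T r) in
noncomputable def parentEdgeLabel (c : V → R) (u : V) : R :=
  c u - ∑ w ∈ ({w | T.Adj u w ∧ T.dist r w = T.dist r u + 1} : Finset V).attach,
    parentEdgeLabel c w
termination_by Fintype.card V - T.dist r u
decreasing_by
  have := T.dist_lt_card r w
  have := (mem_filter.mp w.2).2.2
  omega

theorem parentEdgeLabel_eq (c : V → R) (u : V) :
    parentEdgeLabel T r c u =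
      c u - ∑ w ∈ {w | T.Adj u w ∧ T.dist r w = T.dist r u + 1}, parentEdgeLabel T r c w := by
  rw [parentEdgeLabel, sum_attach]

variable (T r) in
noncomputable def treeEdgeLabel (c : V → R) (e : Sym2 V) : R :=
  if e ∈ T.edgeSet then
    Sym2.lift ⟨fun a b =>
      if T.dist r b = T.dist r a + 1 then parentEdgeLabel T r c b
      else if T.dist r a = T.dist r b + 1 then parentEdgeLabel T r c a else 0,
      fun a b => by dsimp only; split_ifs <;> first | rfl | omega⟩ e
  else 0

theorem treeEdgeLabel_of_notMem {c : V → R} {e : Sym2 V} (he : e ∉ T.edgeSet) :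
    treeEdgeLabel T r c e = 0 :=
  if_neg he

theorem treeEdgeLabel_mk_of_dist_eq_add_one {c : V → R} {w : V} (hadj : T.Adj u w)
    (hw : T.dist r w = T.dist r u + 1) :
    treeEdgeLabel T r c s(u, w) = parentEdgeLabel T r c w := by
  rw [treeEdgeLabel, if_pos (T.mem_edgeSet.mpr hadj), Sym2.lift_mk]
  exact if_pos hw

theorem treeEdgeLabel_mk_of_dist_add_one_eq {c : V → R} {w : V} (hadj : T.Adj u w)
    (hw : T.dist r u = T.dist r w + 1) :
    treeEdgeLabel T r c s(u, w) = parentEdgeLabel T r c u := by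
  rw [treeEdgeLabel, if_pos (T.mem_edgeSet.mpr hadj), Sym2.lift_mk]
  exact (if_neg (by omega)).trans (if_pos hw)

theorem IsTree.sum_neighborFinset_treeEdgeLabel (hT : T.IsTree) (c : V → R) (hu : u ≠ r) :
    ∑ w ∈ T.neighborFinset u, treeEdgeLabel T r c s(u, w) = c u := by
  have hparent : #{w ∈ T.neighborFinset u | T.dist r u = T.dist r w + 1} = 1 := by
    obtain ⟨p, hp, hp_unique⟩ := hT.existsUnique_parent hu
    refine card_eq_one.mpr ⟨p, ?_⟩
    ext w
    simp only [mem_filter, mem_neighborFinset, mem_singleton]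
    exact ⟨hp_unique w, fun h => h ▸ hp⟩
  have hchildren : {w ∈ T.neighborFinset u | ¬T.dist r u = T.dist r w + 1} =
      ({w | T.Adj u w ∧ T.dist r w = T.dist r u + 1} : Finset V) := by
    ext w
    simp only [mem_filter, mem_neighborFinset, mem_univ, true_and, and_congr_right_iff]
    exact fun hadj => ⟨(hT.dist_eq_dist_add_one_of_adj r hadj).resolve_left, by omega⟩
  rw [← sum_filter_add_sum_filter_not _ (fun w => T.dist r u = T.dist r w + 1),
    sum_congr rfl fun w hw => treeEdgeLabel_mk_of_dist_add_one_eq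
      (mem_neighborFinset _ _ _ |>.mp (mem_filter.mp hw).1) (mem_filter.mp hw).2,
    sum_const, hparent, one_smul, hchildren,
    sum_congr rfl fun w hw => treeEdgeLabel_mk_of_dist_eq_add_one (mem_filter.mp hw).2.1
      (mem_filter.mp hw).2.2, parentEdgeLabel_eq]
  abel

theorem IsTree.exists_sum_incidenceFinset_eq [DecidableEq V] (hT : T.IsTree) (r : V)
    (c : V → R) :
    ∃ s : Sym2 V → R, (∀ e ∉ T.edgeSet, s e = 0) ∧
      ∀ u ≠ r, ∑ e ∈ T.incidenceFinset u, s e = c u :=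
  ⟨treeEdgeLabel T r c, fun _ => treeEdgeLabel_of_notMem, fun u hu => by
    rw [sum_incidenceFinset_eq_sum_neighborFinset, hT.sum_neighborFinset_treeEdgeLabel c hu]⟩

end RootedTree

end SimpleGraph

theorem stmt_1_general {V : Type*} [Fintype V] (G : SimpleGraph V)
    (t : ℕ) (c : V → ZMod t)
    (v : V) (T : SimpleGraph V) (hTG : T ≤ G) (hT : T.IsTree) :
    ∃ s : Sym2 V → ZMod t,
      (∀ e ∈ G.edgeSet, e ∉ T.edgeSet → s e = 0) ∧
      ∀ u : V, u ≠ v → twinLabel G s u = c u := by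
  classical
  obtain ⟨s, hs_off, hs_sum⟩ := hT.exists_sum_incidenceFinset_eq v c
  refine ⟨s, fun e _ he => hs_off e he, fun u hu => ?_⟩
  rw [twinLabel, SimpleGraph.sum_incidenceFinset_eq_of_le hTG hs_off, hs_sum u hu]

theorem stmt_1 {V : Type*} [Fintype V] (G : SimpleGraph V) (hG : G.Connected)
    (t : ℕ) (ht : 1 ≤ t) (c : V → ZMod t)
    (hc : ∀ ⦃u w : V⦄, G.Adj u w → c u ≠ c w)
    (v : V) (T : SimpleGraph V) (hTG : T ≤ G) (hT : T.IsTree) :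
    ∃ s : Sym2 V → ZMod t,
      (∀ e ∈ G.edgeSet, e ∉ T.edgeSet → s e = 0) ∧
      ∀ u : V, u ≠ v → twinLabel G s u = c u :=
  stmt_1_general G t c v T hTG hT
end

section
/- Let G be a connected bipartite graph on at least 3 vertices with bipartition (X, Y). Then χ'_it(G) = 2 if and only if |X| is even or |Y| is even. -/
/-!
Over `ZMod 2` the map `s ↦ twinLabel G s` is linear. Its image consists of the labelings with
zero sum: the sum of all labels counts every edge twice, and conversely the labeling
`δᵤ + δᵥ` is realised by the edges of a `u`–`v` walk (edges used twice cancel), and such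
labelings span the zero-sum ones when `G` is connected. On the other hand a proper
`ZMod 2`-colouring of a connected bipartite graph is the indicator of `X` or of `Y`. So a twin
`2`-colouring exists iff the indicator of `X` or of `Y` has zero sum, i.e. `|X|` or `|Y|` is even.
-/

open Finset

open scoped Classical

namespace SimpleGraph

section Coloring

variable {V : Type*} {G : SimpleGraph V}

theorem eq_or_eq_add_one_of_forall_adj_ne (hG : G.Preconnected) {c c' : V → ZMod 2}
    (hc : ∀ ⦃u w⦄, G.Adj u w → c u ≠ c w) (hc' : ∀ ⦃u w⦄, G.Adj u w → c' u ≠ c' w) :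
    c = c' ∨ c = c' + 1 := by
  have hadj : ∀ ⦃u w⦄, G.Adj u w → c u - c' u = c w - c' w := fun u w h => by
    have key : ∀ a b a' b' : ZMod 2, a ≠ b → a' ≠ b' → a - a' = b - b' := by decide
    exact key _ _ _ _ (hc h) (hc' h)
  have hconst : ∀ u w, c u - c' u = c w - c' w := fun u w => by
    obtain ⟨p⟩ := hG u w
    induction p with
    | nil => rfl
    | cons h _ ih => exact (hadj h).trans ih
  rcases isEmpty_or_nonempty V with _ | ⟨⟨v₀⟩⟩
  · exact Or.inl (Subsingleton.elim _ _)
  · have hzmod2 : ∀ a : ZMod 2, a = 0 ∨ a = 1 := by decide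
    rcases hzmod2 (c v₀ - c' v₀) with h0 | h1
    · exact Or.inl <| funext fun v => sub_eq_zero.mp (hconst v v₀ ▸ h0)
    · exact Or.inr <| funext fun v => sub_eq_iff_eq_add'.mp (hconst v v₀ ▸ h1)

theorem forall_adj_ne_iff_eq_or_eq_add_one (hG : G.Preconnected) {c c' : V → ZMod 2}
    (hc' : ∀ ⦃u w⦄, G.Adj u w → c' u ≠ c' w) :
    (∀ ⦃u w⦄, G.Adj u w → c u ≠ c w) ↔ c = c' ∨ c = c' + 1 := by
  refine ⟨fun hc => eq_or_eq_add_one_of_forall_adj_ne hG hc hc', ?_⟩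
  rintro (rfl | rfl)
  · exact hc'
  · exact fun u w h => by simpa using hc' h

end Coloring

end SimpleGraph

section TwinLabel

open SimpleGraph

variable {V : Type*} [Fintype V] (G : SimpleGraph V)

theorem improperTwinIndex_eq_two_iff :
    improperTwinIndex G = 2 ↔ ∃ s : Sym2 V → ZMod 2, IsImproperTwin G 2 s := by
  unfold improperTwinIndex
  set K := {k | 2 ≤ k ∧ ∃ s : Sym2 V → ZMod k, IsImproperTwin G k s}
  refine ⟨fun h => ?_, fun h => ?_⟩
  · have hK : K.Nonempty := Set.nonempty_iff_ne_empty.mpr fun hK => by simp [hK] at h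
    exact (h ▸ Nat.sInf_mem hK).2
  · have h2 : 2 ∈ K := ⟨le_rfl, h⟩
    exact le_antisymm (Nat.sInf_le h2) (Nat.sInf_mem ⟨2, h2⟩).1

noncomputable def twinLabelLinear (k : ℕ) : (Sym2 V → ZMod k) →ₗ[ZMod k] V → ZMod k where
  toFun := twinLabel G
  map_add' _ _ := funext fun _ => sum_add_distrib
  map_smul' _ _ := funext fun _ => (mul_sum _ _ _).symm

theorem twinLabelLinear_apply {k : ℕ} (s : Sym2 V → ZMod k) :
    twinLabelLinear G k s = twinLabel G s :=
  rfl

theorem sum_twinLabel {k : ℕ} (s : Sym2 V → ZMod k) :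
    ∑ v, twinLabel G s v = ∑ e ∈ G.edgeFinset, 2 • s e := by
  unfold twinLabel
  rw [sum_comm' (t' := G.edgeFinset) (s' := fun e : Sym2 V => e.toFinset)]
  · refine sum_congr rfl fun e he => ?_
    rw [sum_const, Sym2.card_toFinset_of_not_isDiag _
      (G.not_isDiag_of_mem_edgeSet (mem_edgeFinset.mp he))]
  · intro v e
    simp [incidenceSet, and_comm]

theorem twinLabel_pi_single_edge {k : ℕ} {u w : V} (h : G.Adj u w) :
    twinLabel G (Pi.single s(u, w) 1 : Sym2 V → ZMod k) = Pi.single u 1 + Pi.single w 1 := by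
  ext x
  simp only [twinLabel, sum_pi_single', mem_incidenceFinset, mk'_mem_incidenceSet_iff, h, true_and]
  rcases eq_or_ne x u with rfl | hxu
  · simp [h.ne.symm]
  · rcases eq_or_ne x w with rfl | hxw
    · simp [hxu]
    · simp [hxu, hxw]

theorem pi_single_add_pi_single_mem_range_twinLabelLinear {u v : V} (h : G.Reachable u v) :
    Pi.single u 1 + Pi.single v 1 ∈ LinearMap.range (twinLabelLinear G 2) := by
  obtain ⟨p⟩ := h
  induction p with
  | nil => rw [← Pi.single_add, CharTwo.add_self_eq_zero, Pi.single_zero]; exact zero_mem _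
  | @cons u w v hadj _ ih =>
    have hsplit : (Pi.single u 1 + Pi.single v 1 : V → ZMod 2) =
        (Pi.single u 1 + Pi.single w 1) + (Pi.single w 1 + Pi.single v 1) := by
      have key : ∀ a b c : ZMod 2, a + c = (a + b) + (b + c) := by decide
      exact funext fun x => key _ _ _
    exact hsplit ▸ add_mem ⟨_, twinLabel_pi_single_edge G hadj⟩ ih

theorem mem_range_twinLabelLinear_iff (hG : G.Preconnected) {f : V → ZMod 2} :
    f ∈ LinearMap.range (twinLabelLinear G 2) ↔ ∑ v, f v = 0 := by
  constructor
  · rintro ⟨s, rfl⟩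
    rw [twinLabelLinear_apply, sum_twinLabel]
    exact sum_eq_zero fun e _ => by rw [two_nsmul, CharTwo.add_self_eq_zero]
  · intro hf
    rcases isEmpty_or_nonempty V with _ | ⟨⟨v₀⟩⟩
    · exact Subsingleton.elim f 0 ▸ zero_mem _
    · have hdecomp : f = ∑ v, f v • (Pi.single v 1 + Pi.single v₀ 1) := by
        simp_rw [smul_add, sum_add_distrib, ← sum_smul, hf, zero_smul, add_zero,
          ← Pi.single_smul, smul_eq_mul, mul_one, univ_sum_single]
      rw [hdecomp]
      exact sum_mem fun v _ => Submodule.smul_mem _ _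
        (pi_single_add_pi_single_mem_range_twinLabelLinear G (hG v v₀))

end TwinLabel

theorem stmt_2_general {V : Type*} [Fintype V] (G : SimpleGraph V) (hG : G.Connected)
    (X Y : Finset V)
    (hpart : ∀ v : V, v ∈ X ↔ v ∉ Y)
    (hbip : ∀ ⦃u w : V⦄, G.Adj u w → (u ∈ X ↔ w ∈ Y)) :
    improperTwinIndex G = 2 ↔ (Even X.card ∨ Even Y.card) := by
  obtain rfl : Y = Xᶜ := by ext v; simp [hpart v]
  let χ : Finset V → V → ZMod 2 := fun S v => if v ∈ S then 1 else 0
  have hχX : ∀ ⦃u w⦄, G.Adj u w → χ X u ≠ χ X w := fun u w h => by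
    have := hbip h
    simp only [χ, mem_compl] at this ⊢
    split_ifs <;> simp_all
  have hχY : χ X + 1 = χ Xᶜ := by
    funext v
    by_cases hv : v ∈ X <;> simp [χ, hv, CharTwo.add_self_eq_zero]
  have hsum : ∀ S : Finset V, ∑ v, χ S v = 0 ↔ Even S.card := fun S => by
    simp [χ, ZMod.natCast_eq_zero_iff_even]
  rw [improperTwinIndex_eq_two_iff, ← hsum, ← hsum, ← hχY,
    ← mem_range_twinLabelLinear_iff G hG.preconnected,
    ← mem_range_twinLabelLinear_iff G hG.preconnected]
  simp only [IsImproperTwin, SimpleGraph.forall_adj_ne_iff_eq_or_eq_add_one hG.preconnected hχX,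
    LinearMap.mem_range, twinLabelLinear_apply, exists_or]

theorem stmt_2 {V : Type*} [Fintype V] (G : SimpleGraph V) (hG : G.Connected)
    (h3 : 3 ≤ Fintype.card V) (X Y : Finset V)
    (hpart : ∀ v : V, v ∈ X ↔ v ∉ Y)
    (hbip : ∀ ⦃u w : V⦄, G.Adj u w → (u ∈ X ↔ w ∈ Y)) :
    improperTwinIndex G = 2 ↔ (Even X.card ∨ Even Y.card) :=
  stmt_2_general G hG X Y hpart hbip
end

section
/- Let G be a bipartite graph in which every connected component has at least 3 vertices. Then for every integer t ≥ 3, G admits an improper twin t-edge coloring. -/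
open Finset

/- In `ℤ_t` an edge weighting adds the weight of each edge to both of its ends, so the realizable
vertex labelings form the subgroup generated by the `e_u + e_v` over edges `uv`. In a bipartite
graph a walk between differently colored vertices `u`, `v` yields `e_u + e_v` as an alternating sum
of these generators.

Each component `C` has at least three vertices, so it contains a vertex `r` whose opposite color
class `B` in `C` has at least two vertices. Summing `a_b (e_b + e_r)` over `b ∈ B` realizes the
labeling that is `a` on `B`, `∑_B a` at `r` and `0` elsewhere. Every edge of `C` joins a vertex of
`B` to `r` or to a vertex labeled `0`, so the labeling is proper as soon as `a_b ≠ 0` and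
`a_b ≠ ∑_B a` for all `b ∈ B`, which weights in `{1, 2}` achieve because `2 ≠ 0` in `ℤ_t`. The
labelings of the different components have disjoint supports and are added up. -/

lemma fin_two_eq_of_ne_of_ne {x y z : Fin 2} (hx : x ≠ z) (hy : y ≠ z) : x = y := by
  omega

lemma exists_ne_zero_ne_sum {R ι : Type*} [CommRing R] (h2 : (2 : R) ≠ 0) {B : Finset ι}
    (hB : 2 ≤ #B) : ∃ a : ι → R, ∀ b ∈ B, a b ≠ 0 ∧ a b ≠ ∑ x ∈ B, a x := by
  have h1 : (1 : R) ≠ 0 := fun h => h2 (by linear_combination 2 * h)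
  by_cases hB1 : (#B : R) = 1
  -- constant weights would sum to `1`; raising two of them to `2` moves the sum to `3`
  · classical
    obtain ⟨b₁, hb₁, b₂, hb₂, hne⟩ := one_lt_card.1 hB
    refine ⟨1 + Pi.single b₁ 1 + Pi.single b₂ 1, fun b _ => ?_⟩
    have hsum : ∑ x ∈ B, (1 + Pi.single b₁ 1 + Pi.single b₂ 1 : ι → R) x = 3 := by
      simp only [Pi.add_apply, sum_add_distrib, Pi.one_apply, sum_const, nsmul_one, hB1,
        sum_pi_single', hb₁, hb₂, if_true]
      norm_num
    have hval : (1 + Pi.single b₁ 1 + Pi.single b₂ 1 : ι → R) b = 1 ∨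
        (1 + Pi.single b₁ 1 + Pi.single b₂ 1 : ι → R) b = 2 := by
      rcases eq_or_ne b b₁ with rfl | hb₁'
      · simp [hne, one_add_one_eq_two]
      rcases eq_or_ne b b₂ with rfl | hb₂'
      · simp [hb₁', one_add_one_eq_two]
      · simp [hb₁', hb₂']
    rw [hsum]
    rcases hval with h | h <;> rw [h]
    · exact ⟨h1, fun h => h2 (by linear_combination -h)⟩
    · exact ⟨h2, fun h => h1 (by linear_combination -h)⟩
  · exact ⟨1, fun b _ => ⟨h1, by simpa [eq_comm] using hB1⟩⟩

section

variable {V : Type*} [Fintype V] (G : SimpleGraph V)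

open scoped Classical

noncomputable def twinLabelHom (k : ℕ) : (Sym2 V → ZMod k) →+ V → ZMod k where
  toFun := twinLabel G
  map_zero' := by ext; simp [twinLabel]
  map_add' s₁ s₂ := by ext; simp [twinLabel, Finset.sum_add_distrib]

variable {G} {k : ℕ}

lemma twinLabel_single_of_adj {u v : V} (h : G.Adj u v) (a : ZMod k) :
    twinLabel G (Pi.single s(u, v) a) = Pi.single u a + Pi.single v a := by
  ext w
  have hmem : s(u, v) ∈ G.incidenceFinset w ↔ w = u ∨ w = v := by
    rw [SimpleGraph.mem_incidenceFinset, SimpleGraph.mk'_mem_incidenceSet_iff, and_iff_right h]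
  rcases eq_or_ne w u with rfl | hu
  · simp [twinLabel, Finset.sum_pi_single', hmem, h.ne.symm]
  · simp [twinLabel, hmem, hu, Pi.single_apply, eq_comm]

lemma mem_range_twinLabelHom_of_walk (col : G.Coloring (Fin 2)) {u v : V} (p : G.Walk u v)
    (a : ZMod k) :
    (col u ≠ col v → Pi.single u a + Pi.single v a ∈ (twinLabelHom G k).range) ∧
      (col u = col v → Pi.single u a - Pi.single v a ∈ (twinLabelHom G k).range) := by
  induction p with
  | nil => exact ⟨fun h => absurd rfl h, fun _ => by simp⟩
  | @cons u w v h p ih =>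
    have hedge : Pi.single u a + Pi.single w a ∈ (twinLabelHom G k).range :=
      ⟨_, twinLabel_single_of_adj h a⟩
    have huw : col u ≠ col w := col.valid h
    constructor
    · intro huv
      convert sub_mem hedge (ih.2 (fin_two_eq_of_ne_of_ne huw.symm huv.symm)) using 1
      abel
    · intro huv
      convert sub_mem hedge (ih.1 (fun hwv => huw (huv.trans hwv.symm))) using 1
      abel

lemma single_add_single_mem_range (col : G.Coloring (Fin 2)) {u v : V} (h : G.Reachable u v)
    (hcol : col u ≠ col v) (a : ZMod k) :
    Pi.single u a + Pi.single v a ∈ (twinLabelHom G k).range :=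
  h.elim fun p => (mem_range_twinLabelHom_of_walk col p a).1 hcol

lemma indicator_add_single_sum_mem_range (col : G.Coloring (Fin 2)) (r : V) (B : Finset V)
    (hB : ∀ b ∈ B, G.Reachable b r ∧ col b ≠ col r) (a : V → ZMod k) :
    (B : Set V).indicator a + Pi.single r (∑ b ∈ B, a b) ∈ (twinLabelHom G k).range := by
  have hsum : (B : Set V).indicator a + Pi.single r (∑ b ∈ B, a b) =
      ∑ b ∈ B, (Pi.single b (a b) + Pi.single r (a b)) := by
    ext v
    simp [Finset.sum_add_distrib, Set.indicator_apply, Pi.single_apply]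
  rw [hsum]
  exact sum_mem fun b hb => single_add_single_mem_range col (hB b hb).1 (hB b hb).2 (a b)

lemma SimpleGraph.ConnectedComponent.exists_two_le_card_opposite (col : G.Coloring (Fin 2))
    {C : G.ConnectedComponent} (hC : 3 ≤ C.supp.ncard) :
    ∃ r ∈ C.supp, 2 ≤ #{v ∈ C.supp.toFinset | col v ≠ col r} := by
  have hcard : #(univ : Finset (Fin 2)) < #C.supp.toFinset := by
    rw [← Set.ncard_eq_toFinset_card', card_univ, Fintype.card_fin]
    exact hC
  obtain ⟨u, hu, w, hw, huw, hcol⟩ :=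
    exists_ne_map_eq_of_card_lt_of_maps_to hcard (f := col) fun _ _ => mem_univ _
  rw [Set.mem_toFinset] at hu hw
  obtain ⟨p⟩ := C.reachable_of_mem_supp hu hw
  obtain ⟨r, hur, -, -⟩ := SimpleGraph.Walk.exists_eq_cons_of_ne huw p
  have hru : col u ≠ col r := col.valid hur
  refine ⟨r, C.mem_supp_of_adj_mem_supp hu hur, one_lt_card.2 ⟨u, ?_, w, ?_, huw⟩⟩ <;>
    simp [hu, hw, ← hcol, hru]

lemma SimpleGraph.ConnectedComponent.exists_mem_range_proper (col : G.Coloring (Fin 2))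
    (h2 : (2 : ZMod k) ≠ 0) {C : G.ConnectedComponent} (hC : 3 ≤ C.supp.ncard) :
    ∃ c ∈ (twinLabelHom G k).range,
      (∀ v ∉ C.supp, c v = 0) ∧ ∀ u ∈ C.supp, ∀ v, G.Adj u v → c u ≠ c v := by
  obtain ⟨r, hr, hB⟩ := C.exists_two_le_card_opposite col hC
  set B := {v ∈ C.supp.toFinset | col v ≠ col r}
  have hmemB : ∀ v, v ∈ B ↔ v ∈ C.supp ∧ col v ≠ col r := by simp [B]
  obtain ⟨a, ha⟩ := exists_ne_zero_ne_sum h2 hB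
  set c := (B : Set V).indicator a + Pi.single r (∑ b ∈ B, a b)
  have hc_mem : ∀ x ∈ B, c x = a x := by
    intro x hx
    have hxr : x ≠ r := fun h => ((hmemB x).1 hx).2 (congrArg col h)
    simp [c, hx, hxr]
  have hc_not_mem : ∀ y ∉ B, c y = if y = r then ∑ b ∈ B, a b else 0 := by
    intro y hy
    simp [c, hy, Pi.single_apply]
  have hne_of_mem : ∀ x ∈ B, ∀ y, G.Adj x y → c x ≠ c y := by
    intro x hx y hxy
    have hxr := ((hmemB x).1 hx).2
    have hy : y ∉ B := fun hy =>
      col.valid hxy (fin_two_eq_of_ne_of_ne hxr ((hmemB y).1 hy).2)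
    rw [hc_mem x hx, hc_not_mem y hy]
    split_ifs
    exacts [(ha x hx).2, (ha x hx).1]
  refine ⟨c, indicator_add_single_sum_mem_range col r B (fun b hb => ?_) a, fun v hv => ?_,
    fun u hu v huv => ?_⟩
  · exact ⟨C.reachable_of_mem_supp ((hmemB b).1 hb).1 hr, ((hmemB b).1 hb).2⟩
  · have hvr : v ≠ r := fun h => hv (h ▸ hr)
    simp [hc_not_mem v fun hvB => hv ((hmemB v).1 hvB).1, hvr]
  · by_cases hur : col u = col r
    · have hv : v ∈ B := (hmemB v).2 ⟨C.mem_supp_of_adj_mem_supp hu huv, hur ▸ (col.valid huv).symm⟩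
      exact (hne_of_mem v hv u huv.symm).symm
    · exact hne_of_mem u ((hmemB u).2 ⟨hu, hur⟩) v huv

lemma exists_isImproperTwin_of_forall_component
    (h : ∀ C : G.ConnectedComponent, ∃ c ∈ (twinLabelHom G k).range,
      (∀ v ∉ C.supp, c v = 0) ∧ ∀ u ∈ C.supp, ∀ v, G.Adj u v → c u ≠ c v) :
    ∃ s, IsImproperTwin G k s := by
  choose c hc hzero hproper using h
  obtain ⟨s, hs⟩ : ∑ C, c C ∈ (twinLabelHom G k).range := sum_mem fun C _ => hc C
  have hlocal : ∀ v, twinLabel G s v = c (G.connectedComponentMk v) v := by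
    intro v
    change twinLabelHom G k s v = _
    rw [hs, Finset.sum_apply]
    exact sum_eq_single_of_mem _ (mem_univ _) fun C _ hC => hzero C v fun hv => hC hv.symm
  refine ⟨s, fun u v huv => ?_⟩
  rw [hlocal, hlocal, ← SimpleGraph.ConnectedComponent.connectedComponentMk_eq_of_adj huv]
  exact hproper _ u rfl v huv

end

theorem stmt_3 {V : Type*} [Fintype V] (G : SimpleGraph V)
    (hbip : G.Colorable 2)
    (hnice : ∀ v : V, 3 ≤ (G.connectedComponentMk v).supp.ncard)
    (t : ℕ) (ht : 3 ≤ t) :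
    ∃ s : Sym2 V → ZMod t, IsImproperTwin G t s := by
  obtain ⟨col⟩ := hbip
  have h2 : (2 : ZMod t) ≠ 0 := by
    rw [← Nat.cast_ofNat, Ne, ZMod.natCast_eq_zero_iff]
    exact fun h => absurd (Nat.le_of_dvd two_pos h) (by omega)
  refine exists_isImproperTwin_of_forall_component fun C => ?_
  obtain ⟨v, rfl⟩ := C.exists_rep
  exact SimpleGraph.ConnectedComponent.exists_mem_range_proper col h2 (hnice v)
end

section
/- Let G be a connected non-bipartite graph, k ≥ 2, c a proper k-vertex coloring of G, and s : E(G) → Z_k an edge coloring whose induced vertex labeling agrees with c on all vertices except possibly a vertex v. Let x ∈ Z_k be such that no neighbor u of v satisfies c(u) = c_s(v) + 2x in Z_k, where c_s(v) is the induced label of v. Then the vertex coloring obtained from c by recoloring v with c_s(v) + 2x is induced by some improper twin k-edge coloring of G. -/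
/-!
Add `x, -x, x, …` to the successive edges of an odd closed walk at `v` (one exists since `G` is
connected and not bipartite). Every passage through a vertex contributes `x - x = 0`, while at `v`
the first and the last edge both carry `x`, as the walk has odd length. Hence the labels of `s`
stay unchanged off `v` and grow by `2x` at `v`, and the choice of `x` keeps the coloring proper.
-/

open Finset

namespace SimpleGraph

variable {V : Type*} {G : SimpleGraph V}

theorem exists_odd_loop_of_not_colorable_two (hG : G.Connected) (hnb : ¬ G.Colorable 2) (v : V) :
    ∃ p : G.Walk v v, Odd p.length := by
  obtain ⟨u, w, hw⟩ : ∃ u, ∃ w : G.Walk u u, Odd w.length := by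
    simpa [two_colorable_iff_forall_loop_even] using hnb
  obtain ⟨q⟩ := hG.preconnected v u
  refine ⟨q.append (w.append q.reverse), ?_⟩
  rw [Walk.length_append, Walk.length_append, Walk.length_reverse, add_left_comm, ← two_mul]
  exact hw.add_even (even_two_mul _)

theorem update_ne_update_of_adj {α : Type*} [DecidableEq V] {f : V → α}
    (hf : ∀ ⦃u w : V⦄, G.Adj u w → f u ≠ f w) {v : V} {a : α} (ha : ∀ u, G.Adj v u → f u ≠ a)
    ⦃u w : V⦄ (h : G.Adj u w) : Function.update f v a u ≠ Function.update f v a w := by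
  rcases eq_or_ne u v with rfl | hu
  · simpa [h.ne.symm] using (ha w h).symm
  rcases eq_or_ne w v with rfl | hw
  · simpa [hu] using ha u h.symm
  simpa [hu, hw] using hf h

end SimpleGraph

section TwinLabel

variable {V : Type*} [Fintype V] (G : SimpleGraph V) {k : ℕ}

theorem twinLabel_add (s t : Sym2 V → ZMod k) :
    twinLabel G (s + t) = twinLabel G s + twinLabel G t := by
  funext v
  simp [twinLabel, Finset.sum_add_distrib]

variable [DecidableEq V]

theorem twinLabel_single_edge {a b : V} (h : G.Adj a b) (x : ZMod k) :
    twinLabel G (Pi.single s(a, b) x) = Pi.single a x + Pi.single b x := by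
  classical
  funext y
  simp only [twinLabel, Finset.sum_pi_single', SimpleGraph.mem_incidenceFinset]
  have hmem : s(a, b) ∈ G.incidenceSet y ↔ y = a ∨ y = b := by
    simp [SimpleGraph.incidenceSet, h, eq_comm]
  simp only [hmem, Pi.add_apply, Pi.single_apply]
  rcases eq_or_ne y a with rfl | hya
  · simp [h.ne]
  · simp [hya]

theorem SimpleGraph.Walk.exists_twinLabel_eq {a b : V} (p : G.Walk a b) (x : ZMod k) :
    ∃ t : Sym2 V → ZMod k,
      twinLabel G t = Pi.single a x - Pi.single b ((-1) ^ p.length * x) := by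
  induction p generalizing x with
  | nil => exact ⟨0, by funext; simp [twinLabel]⟩
  | @cons a a' b h q ih =>
    obtain ⟨t, ht⟩ := ih (-x)
    refine ⟨Pi.single s(a, a') x + t, ?_⟩
    rw [twinLabel_add, twinLabel_single_edge G h, ht, SimpleGraph.Walk.length_cons, pow_succ,
      Pi.single_neg, mul_assoc, neg_one_mul]
    abel

end TwinLabel

theorem stmt_4_general {V : Type*} [Fintype V] [DecidableEq V] (G : SimpleGraph V) (hG : G.Connected)
    (hnb : ¬ G.Colorable 2) (k : ℕ)
    (c : V → ZMod k) (hc : ∀ ⦃u w : V⦄, G.Adj u w → c u ≠ c w)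
    (s : Sym2 V → ZMod k) (v : V)
    (hs : ∀ u : V, u ≠ v → twinLabel G s u = c u)
    (x : ZMod k)
    (hx : ∀ u : V, G.Adj v u → c u ≠ twinLabel G s v + 2 * x) :
    ∃ s' : Sym2 V → ZMod k, IsImproperTwin G k s' ∧
      ∀ u : V, twinLabel G s' u =
        Function.update c v (twinLabel G s v + 2 * x) u := by
  obtain ⟨p, hp⟩ := G.exists_odd_loop_of_not_colorable_two hG hnb v
  obtain ⟨t, ht⟩ := p.exists_twinLabel_eq G x
  have hlabel : twinLabel G (s + t) = Function.update c v (twinLabel G s v + 2 * x) := by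
    rw [twinLabel_add, ht, hp.neg_one_pow]
    funext u
    rcases eq_or_ne u v with rfl | hu
    · simp [two_mul]
    · simp [hu, hs u hu]
  refine ⟨s + t, fun u w h => ?_, congrFun hlabel⟩
  rw [hlabel]
  exact G.update_ne_update_of_adj hc hx h

theorem stmt_4 {V : Type*} [Fintype V] [DecidableEq V] (G : SimpleGraph V) (hG : G.Connected)
    (hnb : ¬ G.Colorable 2) (k : ℕ) (hk : 2 ≤ k)
    (c : V → ZMod k) (hc : ∀ ⦃u w : V⦄, G.Adj u w → c u ≠ c w)
    (s : Sym2 V → ZMod k) (v : V)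
    (hs : ∀ u : V, u ≠ v → twinLabel G s u = c u)
    (x : ZMod k)
    (hx : ∀ u : V, G.Adj v u → c u ≠ twinLabel G s v + 2 * x) :
    ∃ s' : Sym2 V → ZMod k, IsImproperTwin G k s' ∧
      ∀ u : V, twinLabel G s' u =
        Function.update c v (twinLabel G s v + 2 * x) u :=
  stmt_4_general G hG hnb k c hc s v hs x hx
end

section
/- Let G be a graph with no bipartite component and each component of order at least 3, and let t be an odd integer with t ≥ χ(G) ≥ 3. Then every proper t-vertex coloring of G using colors in {0, 1, ..., t−1} is induced by some improper twin t-edge coloring of G. -/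
open Finset

/-!
Put weights `x, -x, x, …` on the successive edges of a closed walk of odd length through `v`.
Every passage of the walk through an intermediate vertex contributes `x - x = 0`, while the
first and last edges both carry `x` and meet at `v`, so the induced labeling is `2x` at `v` and
`0` elsewhere. A component that is not bipartite has such a walk through each of its vertices,
and `2` is invertible in `ZMod t` for odd `t`; summing these weightings with
`x = f v / 2` over all vertices `v` induces any prescribed labeling `f`.
-/

namespace SimpleGraph

variable {V M : Type*} {G : SimpleGraph V} [AddCommGroup M]

lemma exists_odd_loop_of_not_colorable_two_s5 {v : V}
    (h : ¬ (G.induce (G.connectedComponentMk v).supp).Colorable 2) :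
    ∃ p : G.Walk v v, Odd p.length := by
  obtain ⟨u, q, hq⟩ : ∃ u, ∃ q : (G.induce (G.connectedComponentMk v).supp).Walk u u,
      Odd q.length := by
    simpa [two_colorable_iff_forall_loop_even] using h
  let φ := (Embedding.induce (G := G) (G.connectedComponentMk v).supp).toHom
  obtain ⟨r⟩ : G.Reachable v (φ u) := (ConnectedComponent.exact u.2).symm
  refine ⟨(r.append (q.map φ)).append r.reverse, ?_⟩
  rw [Walk.length_append, Walk.length_append, Walk.length_reverse, Walk.length_map]
  grind

namespace Walk

variable [DecidableEq V]

def alternatingWeight : ∀ {a b : V}, G.Walk a b → M → Sym2 V → M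
  | _, _, nil, _ => 0
  | _, _, cons (u := u) (v := v) _ q, x => Pi.single s(u, v) x + q.alternatingWeight (-x)

variable [G.LocallyFinite]

lemma sum_incidenceFinset_single {a c : V} (h : G.Adj a c) (x : M) (w : V) :
    ∑ e ∈ G.incidenceFinset w, Pi.single s(a, c) x e
      = (Pi.single a x : V → M) w + (Pi.single c x : V → M) w := by
  simp only [sum_pi_single', mem_incidenceFinset]
  split_ifs with hmem <;> rw [mem_incidenceFinset, mk'_mem_incidenceSet_iff] at hmem
  · rcases hmem.2 with rfl | rfl
    · simp [h.ne]
    · simp [h.ne']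
  · simp only [h, true_and, not_or] at hmem
    simp [hmem.1, hmem.2]

lemma sum_incidenceFinset_alternatingWeight {a b : V} (p : G.Walk a b) (x : M) (w : V) :
    ∑ e ∈ G.incidenceFinset w, p.alternatingWeight x e
      = (Pi.single a x : V → M) w - (-1 : ℤ) ^ p.length • (Pi.single b x : V → M) w := by
  induction p generalizing x with
  | nil => simp [alternatingWeight]
  | cons h q ih =>
    simp only [alternatingWeight, Pi.add_apply, sum_add_distrib, sum_incidenceFinset_single h, ih,
      Pi.single_neg, Pi.neg_apply, length_cons, pow_succ, smul_neg, mul_neg_one, neg_smul]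
    abel

lemma sum_incidenceFinset_alternatingWeight_of_odd {a : V} (p : G.Walk a a) (hp : Odd p.length)
    (x : M) (w : V) :
    ∑ e ∈ G.incidenceFinset w, p.alternatingWeight x e = (Pi.single a (x + x) : V → M) w := by
  rw [sum_incidenceFinset_alternatingWeight, hp.neg_one_pow, neg_one_smul, sub_neg_eq_add,
    Pi.single_add, Pi.add_apply]

end Walk

theorem exists_sum_incidenceFinset_eq [Fintype V] [DecidableEq V] [G.LocallyFinite]
    (hodd : ∀ v, ∃ p : G.Walk v v, Odd p.length) (hhalf : ∀ y : M, ∃ x, x + x = y)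
    (f : V → M) : ∃ s : Sym2 V → M, ∀ w, ∑ e ∈ G.incidenceFinset w, s e = f w := by
  choose p hp using hodd
  choose half hhalf using hhalf
  refine ⟨∑ v, (p v).alternatingWeight (half (f v)), fun w => ?_⟩
  simp only [Finset.sum_apply]
  rw [sum_comm]
  simp [Walk.sum_incidenceFinset_alternatingWeight_of_odd _ (hp _), hhalf]

end SimpleGraph

theorem stmt_5_general {V : Type*} [Fintype V] (G : SimpleGraph V)
    (hnb : ∀ v : V, ¬ (G.induce (G.connectedComponentMk v).supp).Colorable 2)
    (t : ℕ) (htodd : Odd t)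
    (f : V → ZMod t) :
    ∃ s : Sym2 V → ZMod t, ∀ u : V, twinLabel G s u = f u := by
  classical
  have hhalf (y : ZMod t) : ∃ x, x + x = y := ⟨(2 : ZMod t)⁻¹ * y, by
    have := ZMod.coe_mul_inv_eq_one 2 (Nat.coprime_two_left.mpr htodd)
    push_cast at this
    rw [← two_mul, ← mul_assoc, this, one_mul]⟩
  obtain ⟨s, hs⟩ := G.exists_sum_incidenceFinset_eq
    (fun v => G.exists_odd_loop_of_not_colorable_two_s5 (hnb v)) hhalf f
  -- `convert` reconciles the classical instances inside `twinLabel` with the ones used here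
  exact ⟨s, fun u => by rw [twinLabel]; convert hs u⟩

theorem stmt_5 {V : Type*} [Fintype V] (G : SimpleGraph V)
    (hnb : ∀ v : V, ¬ (G.induce (G.connectedComponentMk v).supp).Colorable 2)
    (hnice : ∀ v : V, 3 ≤ (G.connectedComponentMk v).supp.ncard)
    (t : ℕ) (htodd : Odd t)
    (hχ3 : 3 ≤ G.chromaticNumber) (htχ : G.chromaticNumber ≤ (t : ℕ∞))
    (f : V → ZMod t) (hf : ∀ ⦃u w : V⦄, G.Adj u w → f u ≠ f w) :
    ∃ s : Sym2 V → ZMod t, ∀ u : V, twinLabel G s u = f u :=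
  stmt_5_general G hnb t htodd f
end

section
/- Let G be a graph each of whose components has at least 3 vertices. If G admits an improper twin k-edge coloring for some k ≥ 2, then G admits an improper twin t-edge coloring for every t ≥ k. -/
open Finset

/-!
The vertex labellings `V → ZMod t` induced by edge colourings form the subgroup generated by
the vectors `e u + e v` for the edges `uv`. Chaining these along a walk from `u` to `v` gives
`e u - (-1) ^ ℓ • e v`, where `ℓ` is the length of the walk. So on a component with an odd closed
walk at `r`, every labelling whose sum is even (of the form `m + m`) is realisable: move all the
mass to `r` along even walks, then absorb `e r (m + m)` with the odd closed walk. On a bipartite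
component, a labelling supported on one side with sum `0` is realisable.

For `t > k` we reuse the given proper labelling with values `0, …, k - 1` on non-bipartite
components: when `t` is odd every element of `ZMod t` is even, and when `t` is even the sum can be
made even by recolouring one vertex with the unused colour `t - 1`, or by adding `1` to every
colour if all colours on the component are odd. On a bipartite component, which has at least
three vertices, one side has at least two vertices; there we label that side with nonzero values
summing to `0` (possible since `t ≥ 3`) and the other side with `0`.
-/

open scoped Classical

theorem ZMod.even_of_odd {t : ℕ} (ht : Odd t) (x : ZMod t) : Even x := by
  obtain ⟨j, rfl⟩ := ht
  refine ⟨((j + 1 : ℕ) : ZMod (2 * j + 1)) * x, ?_⟩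
  have h : ((j + 1 : ℕ) : ZMod (2 * j + 1)) + ((j + 1 : ℕ) : ZMod (2 * j + 1)) = 1 := by
    rw [← Nat.cast_add, show j + 1 + (j + 1) = (2 * j + 1) + 1 by ring, Nat.cast_add,
      ZMod.natCast_self, zero_add, Nat.cast_one]
  rw [← add_mul, h, one_mul]

theorem exists_ne_zero_ne {A : Type*} [AddCommGroup A] [Fintype A] (hA : 2 < Fintype.card A)
    (s : A) : ∃ a : A, a ≠ 0 ∧ a ≠ s := by
  obtain ⟨a, -, ha⟩ := exists_mem_notMem_of_card_lt_card
    (card_le_two.trans_lt (hA.trans_eq card_univ.symm) : ({0, s} : Finset A).card < _)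
  simp only [mem_insert, mem_singleton, not_or] at ha
  exact ⟨a, ha⟩

section Labelling

variable {V A : Type*} [AddCommGroup A]

theorem Finset.exists_support_eq_sum_eq [Fintype A] (hA : 2 < Fintype.card A) {X : Finset V}
    (hX : X.Nonempty) {s : A} (hs : s ≠ 0) :
    ∃ c : V → A, Function.support c = X ∧ ∑ v ∈ X, c v = s := by
  induction hX using Nonempty.cons_induction generalizing s with
  | singleton a => exact ⟨Pi.single a s, by simp [Pi.support_single_of_ne hs], by simp⟩
  | cons a X haX hX ih =>
    obtain ⟨x, hx0, hxs⟩ := exists_ne_zero_ne hA s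
    obtain ⟨c, hc, hcs⟩ := ih (sub_ne_zero.mpr hxs.symm)
    refine ⟨Function.update c a x, ?_, ?_⟩
    · rw [Function.support_update_of_ne_zero _ _ hx0, hc, coe_cons]
    · rw [sum_cons, Function.update_self, sum_update_of_notMem haX, hcs, add_sub_cancel]

theorem Finset.exists_support_eq_sum_eq_zero [Fintype A] (hA : 2 < Fintype.card A)
    {X : Finset V} (hX : 2 ≤ X.card) :
    ∃ c : V → A, Function.support c = X ∧ ∑ v ∈ X, c v = 0 := by
  obtain ⟨a, ha⟩ := card_pos.mp (by omega : 0 < X.card)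
  obtain ⟨x, hx0, -⟩ := exists_ne_zero_ne hA 0
  obtain ⟨c, hc, hcs⟩ := (X.erase a).exists_support_eq_sum_eq hA
    (card_pos.mp (by rw [card_erase_of_mem ha]; omega)) (neg_ne_zero.mpr hx0)
  refine ⟨Function.update c a x, ?_, ?_⟩
  · rw [Function.support_update_of_ne_zero _ _ hx0, hc, coe_erase, Set.insert_sdiff_singleton,
      Set.insert_eq_of_mem (mem_coe.mpr ha)]
  · rw [← add_sum_erase X _ ha, Function.update_self, sum_update_of_notMem (notMem_erase a X),
      hcs, add_neg_cancel]

theorem AddSubgroup.sub_single_sum_mem {R : AddSubgroup (V → A)} {P : Finset V} {v₀ : V}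
    (h : ∀ v ∈ P, ∀ x, Pi.single v x - Pi.single v₀ x ∈ R) {f : V → A}
    (hf : Function.support f ⊆ P) : f - Pi.single v₀ (∑ v ∈ P, f v) ∈ R := by
  have hf_eq : f = ∑ v ∈ P, Pi.single v (f v) := by
    funext w
    rw [Finset.sum_apply, sum_pi_single]
    split_ifs with hw
    · rfl
    · exact Function.notMem_support.mp fun h => hw (hf h)
  have hsingle : Pi.single v₀ (∑ v ∈ P, f v) = ∑ v ∈ P, (Pi.single v₀ (f v) : V → A) :=
    map_sum (AddMonoidHom.single (fun _ : V => A) v₀) f P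
  rw [hsingle]
  nth_rewrite 1 [hf_eq]
  rw [← sum_sub_distrib]
  exact R.sum_mem fun v hv => h v hv (f v)

end Labelling

namespace SimpleGraph

variable {V : Type*} [Fintype V] {G : SimpleGraph V} {t : ℕ}

section Coloring

theorem Coloring.exists_le_even_sum {m : ℕ} (hm : Odd m) (c : G.Coloring ℕ) (hc : ∀ v, c v < m)
    (S : Finset V) : ∃ c' : G.Coloring ℕ, (∀ v, c' v ≤ m) ∧ Even (∑ v ∈ S, c' v) := by
  by_cases hodd : ∀ v ∈ S, Odd (c v)
  · refine ⟨Coloring.mk (fun v => c v + 1) fun huv h => c.valid huv (by omega), fun v => hc v,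
      even_sum _ fun v hv => (hodd v hv).add_one⟩
  obtain ⟨w, hw, hw_even⟩ : ∃ w ∈ S, Even (c w) := by
    push Not at hodd
    simpa only [Nat.not_odd_iff_even] using hodd
  by_cases hsum : Even (∑ v ∈ S, c v)
  · exact ⟨c, fun v => (hc v).le, hsum⟩
  -- recolouring `w` with the unused odd colour `m` flips the parity of the sum
  have hvalid : ∀ {u v}, G.Adj u v → Function.update c w m u ≠ Function.update c w m v := by
    intro u v huv
    by_cases hu : u = w <;> by_cases hv : v = w
    · exact absurd (hu.trans hv.symm) huv.ne
    · simp [hu, hv, (hc v).ne']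
    · simp [hu, hv, (hc u).ne]
    · simpa [hu, hv] using c.valid huv
  refine ⟨Coloring.mk _ hvalid, fun v => ?_, ?_⟩
  · show Function.update c w m v ≤ m
    by_cases hv : v = w <;> simp [hv, (hc v).le]
  · show Even (∑ v ∈ S, Function.update c w m v)
    rw [sum_update_of_mem hw, sdiff_singleton_eq_erase, Nat.even_add]
    rw [← add_sum_erase S _ hw, Nat.even_add] at hsum
    exact iff_of_false (Nat.not_even_iff_odd.mpr hm) fun h => hsum (iff_of_true hw_even h)

theorem Coloring.exists_zmod_even_sum {k : ℕ} (hkt : k < t) (c : G.Coloring ℕ)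
    (hc : ∀ v, c v < k) (S : Finset V) : ∃ c' : G.Coloring (ZMod t), Even (∑ v ∈ S, c' v) := by
  obtain ⟨c', hc't, heven⟩ :
      ∃ c' : G.Coloring ℕ, (∀ v, c' v < t) ∧ Even (∑ v ∈ S, (c' v : ZMod t)) := by
    rcases Nat.even_or_odd t with ht | ht
    · obtain ⟨c', hc'le, heven⟩ := c.exists_le_even_sum (m := t - 1)
        (Nat.Even.sub_odd (by omega) ht odd_one) (fun v => by have := hc v; omega) S
      exact ⟨c', fun v => by have := hc'le v; omega, by rw [← Nat.cast_sum]; exact heven.natCast⟩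
    · exact ⟨c, fun v => (hc v).trans hkt, ZMod.even_of_odd ht _⟩
  refine ⟨Coloring.mk (fun v => (c' v : ZMod t)) fun huv h => c'.valid huv ?_, heven⟩
  rwa [ZMod.natCast_eq_natCast_iff', Nat.mod_eq_of_lt (hc't _), Nat.mod_eq_of_lt (hc't _)] at h

end Coloring

section TwinLabel

variable (G t) in
noncomputable def twinLabelHom : (Sym2 V → ZMod t) →+ (V → ZMod t) :=
  AddMonoidHom.mk' (twinLabel G) fun _ _ => funext fun _ => sum_add_distrib

theorem twinLabel_single_of_adj {u v : V} (huv : G.Adj u v) (x : ZMod t) :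
    twinLabel G (Pi.single s(u, v) x) = Pi.single u x + Pi.single v x := by
  funext w
  rw [twinLabel, sum_pi_single']
  simp only [mem_incidenceFinset, mk'_mem_incidenceSet_iff, Pi.add_apply, Pi.single_apply]
  rcases eq_or_ne w u with rfl | hu
  · simp [huv, huv.ne]
  · rcases eq_or_ne w v with rfl | hv <;> simp [*]

theorem single_sub_single_mem_range_of_walk {u v : V} (W : G.Walk u v) (x : ZMod t) :
    Pi.single u x - Pi.single v ((-1) ^ W.length * x) ∈ (twinLabelHom G t).range := by
  induction W generalizing x with
  | nil => simp
  | @cons u w v huw W ih =>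
    have hedge : Pi.single u x + Pi.single w x ∈ (twinLabelHom G t).range :=
      ⟨Pi.single s(u, w) x, twinLabel_single_of_adj huw x⟩
    convert add_mem hedge (ih (-x)) using 1
    simp only [Walk.length_cons, pow_succ, Pi.single_neg, mul_neg, neg_mul, mul_one]
    abel

theorem single_sub_single_mem_range_of_even {u v : V} (W : G.Walk u v) (hW : Even W.length)
    (x : ZMod t) : Pi.single u x - Pi.single v x ∈ (twinLabelHom G t).range := by
  simpa [hW.neg_one_pow] using single_sub_single_mem_range_of_walk W x

theorem single_add_self_mem_range_of_odd {u : V} (W : G.Walk u u) (hW : Odd W.length)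
    (x : ZMod t) : Pi.single u (x + x) ∈ (twinLabelHom G t).range := by
  have h := single_sub_single_mem_range_of_walk W x
  rwa [hW.neg_one_pow, neg_one_mul, Pi.single_neg, sub_neg_eq_add, ← Pi.single_add] at h

theorem mem_range_twinLabelHom_of_odd_loop {r : V} (W₀ : G.Walk r r) (hW₀ : Odd W₀.length)
    {f : V → ZMod t} (hf : Function.support f ⊆ (G.connectedComponentMk r).supp)
    (hsum : Even (∑ v ∈ (G.connectedComponentMk r).supp.toFinset, f v)) :
    f ∈ (twinLabelHom G t).range := by
  have hdiff : ∀ v ∈ (G.connectedComponentMk r).supp.toFinset, ∀ x : ZMod t,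
      Pi.single v x - Pi.single r x ∈ (twinLabelHom G t).range := by
    intro v hv x
    obtain ⟨W⟩ : G.Reachable v r := ConnectedComponent.eq.mp (by simpa using hv)
    rcases Nat.even_or_odd W.length with hW | hW
    · exact single_sub_single_mem_range_of_even W hW x
    · refine single_sub_single_mem_range_of_even (W.append W₀) ?_ x
      rw [Walk.length_append]
      exact hW.add_odd hW₀
  obtain ⟨m, hm⟩ := hsum
  have h := add_mem (AddSubgroup.sub_single_sum_mem hdiff (by simpa using hf))
    (single_add_self_mem_range_of_odd W₀ hW₀ m)
  rwa [← hm, sub_add_cancel] at h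

end TwinLabel

section ParityClass

variable (G) in
noncomputable def parityClass (r : V) (i : ZMod 2) : Finset V :=
  {v | ∃ W : G.Walk r v, (W.length : ZMod 2) = i}

variable {r : V}

theorem exists_even_walk_of_mem_parityClass {i : ZMod 2} {u v : V}
    (hu : u ∈ G.parityClass r i) (hv : v ∈ G.parityClass r i) :
    ∃ W : G.Walk u v, Even W.length := by
  simp only [parityClass, mem_filter, mem_univ, true_and] at hu hv
  obtain ⟨W₁, rfl⟩ := hu
  obtain ⟨W₂, hW₂⟩ := hv
  refine ⟨W₁.reverse.append W₂, ?_⟩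
  rw [← ZMod.natCast_eq_zero_iff_even, Walk.length_append, Walk.length_reverse, Nat.cast_add, hW₂,
    CharTwo.add_self_eq_zero]

theorem mem_parityClass_iff_of_forall_loop_even (hr : ∀ W : G.Walk r r, Even W.length)
    {i : ZMod 2} {v : V} (W : G.Walk r v) : v ∈ G.parityClass r i ↔ (W.length : ZMod 2) = i := by
  simp only [parityClass, mem_filter, mem_univ, true_and]
  refine ⟨fun ⟨W', hW'⟩ => hW' ▸ ?_, fun h => ⟨W, h⟩⟩
  have h := hr (W.append W'.reverse)
  rw [← ZMod.natCast_eq_zero_iff_even, Walk.length_append, Walk.length_reverse, Nat.cast_add] at h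
  exact CharTwo.add_eq_zero.mp h

theorem mem_parityClass_iff_notMem_of_adj (hr : ∀ W : G.Walk r r, Even W.length) {i : ZMod 2}
    {u v : V} (hu : G.Reachable r u) (huv : G.Adj u v) :
    u ∈ G.parityClass r i ↔ v ∉ G.parityClass r i := by
  obtain ⟨W⟩ := hu
  rw [mem_parityClass_iff_of_forall_loop_even hr W,
    mem_parityClass_iff_of_forall_loop_even hr (W.concat huv), Walk.length_concat, Nat.cast_succ]
  generalize (W.length : ZMod 2) = a
  revert a i
  decide

theorem exists_two_le_card_parityClass (hr : ∀ W : G.Walk r r, Even W.length)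
    (hK : 3 ≤ (G.connectedComponentMk r).supp.ncard) : ∃ i, 2 ≤ (G.parityClass r i).card := by
  have hunion :
      (G.connectedComponentMk r).supp.toFinset = G.parityClass r 0 ∪ G.parityClass r 1 := by
    ext v
    simp only [Set.mem_toFinset, ConnectedComponent.mem_supp_iff, ConnectedComponent.eq,
      mem_union, parityClass, mem_filter, mem_univ, true_and]
    constructor
    · rintro ⟨W⟩
      obtain h | h : (W.reverse.length : ZMod 2) = 0 ∨ (W.reverse.length : ZMod 2) = 1 := by
        generalize (W.reverse.length : ZMod 2) = a
        revert a
        decide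
      exacts [Or.inl ⟨_, h⟩, Or.inr ⟨_, h⟩]
    · rintro (⟨W, -⟩ | ⟨W, -⟩) <;> exact ⟨W.reverse⟩
  have hdisj : Disjoint (G.parityClass r 0) (G.parityClass r 1) := by
    refine Finset.disjoint_left.mpr fun v h₀ h₁ => ?_
    obtain ⟨W, -⟩ := (mem_filter.mp h₀).2
    rw [mem_parityClass_iff_of_forall_loop_even hr W] at h₀ h₁
    exact zero_ne_one (h₀.symm.trans h₁)
  rw [Set.ncard_eq_toFinset_card', hunion, card_union_of_disjoint hdisj] at hK
  by_contra! h
  have := h 0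
  have := h 1
  omega

end ParityClass

section Components

def IsTwinLabelOn (K : G.ConnectedComponent) (f : V → ZMod t) : Prop :=
  f ∈ (twinLabelHom G t).range ∧ Function.support f ⊆ K.supp ∧
    ∀ ⦃u v⦄, u ∈ K.supp → G.Adj u v → f u ≠ f v

theorem exists_isTwinLabelOn_of_odd_loop {r : V} (W₀ : G.Walk r r) (hW₀ : Odd W₀.length)
    (c : G.Coloring (ZMod t)) (hc : Even (∑ v ∈ (G.connectedComponentMk r).supp.toFinset, c v)) :
    ∃ f : V → ZMod t, IsTwinLabelOn (G.connectedComponentMk r) f := by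
  set K := G.connectedComponentMk r
  refine ⟨K.supp.indicator c, mem_range_twinLabelHom_of_odd_loop W₀ hW₀
    Set.support_indicator_subset ?_, Set.support_indicator_subset, fun u v hu huv => ?_⟩
  · rwa [sum_congr rfl fun v hv => Set.indicator_of_mem (Set.mem_toFinset.mp hv) c]
  · rw [Set.indicator_of_mem hu, Set.indicator_of_mem (K.mem_supp_of_adj_mem_supp hu huv)]
    exact c.valid huv

theorem exists_isTwinLabelOn_of_forall_loop_even (ht : 2 < t) {r : V}
    (hr : ∀ W : G.Walk r r, Even W.length) (hK : 3 ≤ (G.connectedComponentMk r).supp.ncard) :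
    ∃ f : V → ZMod t, IsTwinLabelOn (G.connectedComponentMk r) f := by
  have : NeZero t := ⟨by omega⟩
  obtain ⟨i, hi⟩ := exists_two_le_card_parityClass hr hK
  obtain ⟨v₀, hv₀⟩ := card_pos.mp (by omega : 0 < (G.parityClass r i).card)
  obtain ⟨c, hc, hc_sum⟩ :=
    (G.parityClass r i).exists_support_eq_sum_eq_zero (by rwa [ZMod.card t]) hi
  have hmem : ∀ v, v ∈ Function.support c ↔ v ∈ G.parityClass r i := fun v => by
    rw [hc, mem_coe]
  refine ⟨c, ?_, fun v hv => ?_, fun u v hu huv => ?_⟩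
  · have hdiff : ∀ v ∈ G.parityClass r i, ∀ x : ZMod t,
        Pi.single v x - Pi.single v₀ x ∈ (twinLabelHom G t).range := by
      intro v hv x
      obtain ⟨W, hW⟩ := exists_even_walk_of_mem_parityClass hv hv₀
      exact single_sub_single_mem_range_of_even W hW x
    have h := AddSubgroup.sub_single_sum_mem hdiff hc.le
    rwa [hc_sum, Pi.single_zero, sub_zero] at h
  · obtain ⟨W, -⟩ := (mem_filter.mp ((hmem v).mp hv)).2
    exact ConnectedComponent.eq.mpr ⟨W.reverse⟩
  · have hsides := mem_parityClass_iff_notMem_of_adj (i := i) hr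
      (ConnectedComponent.eq.mp hu).symm huv
    by_cases hu' : u ∈ G.parityClass r i
    · rw [Function.notMem_support.mp ((hmem v).not.mpr (hsides.mp hu'))]
      exact Function.mem_support.mp ((hmem u).mpr hu')
    · rw [Function.notMem_support.mp ((hmem u).not.mpr hu')]
      exact (Function.mem_support.mp ((hmem v).mpr (not_not.mp (hsides.not.mp hu')))).symm

theorem exists_isImproperTwin_of_forall_exists_isTwinLabelOn
    (h : ∀ K : G.ConnectedComponent, ∃ f : V → ZMod t, IsTwinLabelOn K f) :
    ∃ s : Sym2 V → ZMod t, IsImproperTwin G t s := by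
  choose f hf_mem hf_supp hf_ne using h
  obtain ⟨s, hs⟩ := AddMonoidHom.mem_range.mp
    ((twinLabelHom G t).range.sum_mem fun K _ => hf_mem K : ∑ K, f K ∈ _)
  have hlabel : ∀ w, twinLabel G s w = f (G.connectedComponentMk w) w := by
    intro w
    rw [show twinLabel G s = twinLabelHom G t s from rfl, hs, Finset.sum_apply,
      sum_eq_single (G.connectedComponentMk w)]
    · exact fun K _ hK => Function.notMem_support.mp fun hw => hK (hf_supp K hw).symm
    · simp
  refine ⟨s, fun u v huv => ?_⟩
  rw [hlabel, hlabel, ← ConnectedComponent.eq.mpr huv.reachable]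
  exact hf_ne _ rfl huv

end Components

end SimpleGraph

open SimpleGraph in
theorem stmt_8 {V : Type*} [Fintype V] (G : SimpleGraph V)
    (hnice : ∀ v : V, 3 ≤ (G.connectedComponentMk v).supp.ncard)
    (k : ℕ) (hk : 2 ≤ k)
    (h : ∃ s : Sym2 V → ZMod k, IsImproperTwin G k s) :
    ∀ t : ℕ, k ≤ t → ∃ s : Sym2 V → ZMod t, IsImproperTwin G t s := by
  intro t hkt
  obtain rfl | hkt := hkt.eq_or_lt
  · exact h
  obtain ⟨s, hs⟩ := h
  have : NeZero k := ⟨by omega⟩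
  let c : G.Coloring ℕ := Coloring.mk (fun v => (twinLabel G s v).val)
    fun huv h => hs huv (ZMod.val_injective k h)
  refine exists_isImproperTwin_of_forall_exists_isTwinLabelOn fun K => ?_
  induction K using ConnectedComponent.ind with | h r => ?_
  by_cases hr : ∃ W : G.Walk r r, Odd W.length
  · obtain ⟨W₀, hW₀⟩ := hr
    obtain ⟨c', hc'⟩ := c.exists_zmod_even_sum hkt (fun v => ZMod.val_lt _)
      (G.connectedComponentMk r).supp.toFinset
    exact exists_isTwinLabelOn_of_odd_loop W₀ hW₀ c' hc'
  · push Not at hr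
    exact exists_isTwinLabelOn_of_forall_loop_even (by omega) (by simpa using hr) (hnice r)
end

section
/- Let G be a connected graph with χ(G) ≡ 2 (mod 4) such that some proper χ(G)-vertex coloring of G has a color class of even size. Then G admits a proper χ(G)-vertex coloring f with colors in {0, ..., χ(G)−1} such that Σ_{v ∈ V(G)} f(v) is even. -/
/-!
Modulo 2, swapping colors `p` and `q` of a coloring `f` changes `∑ f(v)` by `(c_p - c_q)(q - p)`,
where `c_j` is the size of the class of color `j`. If the sum is odd, some odd color `a` has an odd
class; together with the even class `i` and the even color `0`, this yields two colors differing in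
parity both as colors and in class size, and swapping them makes the sum even.
-/

open Finset

section

variable {V α : Type*} [Fintype V] [Fintype α] [DecidableEq α]

theorem sum_comp_eq_sum_card_fiber_nsmul {M : Type*} [AddCommMonoid M] (f : V → α) (w : α → M) :
    ∑ v, w (f v) = ∑ a, #{v | f v = a} • w a := by
  simp only [← sum_fiberwise' univ f w, sum_const]

theorem sum_swap_comp {R : Type*} [CommRing R] (f : V → α) (w : α → R) (p q : α) :
    ∑ v, w (Equiv.swap p q (f v)) =
      ∑ v, w (f v) + ((#{v | f v = p} : R) - #{v | f v = q}) * (w q - w p) := by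
  rcases eq_or_ne p q with rfl | hpq
  · simp
  rw [sum_comp_eq_sum_card_fiber_nsmul f (fun a => w (Equiv.swap p q a)),
    sum_comp_eq_sum_card_fiber_nsmul f, ← sub_eq_iff_eq_add', ← sum_sub_distrib,
    sum_eq_add p q hpq]
  · simp only [Equiv.swap_apply_left, Equiv.swap_apply_right, nsmul_eq_mul]
    ring
  · intro a _ ha
    rw [Equiv.swap_apply_of_ne_of_ne ha.1 ha.2, sub_self]
  · simp
  · simp

theorem ZMod.exists_sub_mul_sub_eq_one {ι : Type*} (x y : ι → ZMod 2) {a i z : ι}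
    (ha : x a * y a ≠ 0) (hi : x i = 0) (hz : y z = 0) :
    ∃ p q, (x p - x q) * (y q - y p) = 1 := by
  have two : ∀ t : ZMod 2, t = 0 ∨ t = 1 := by decide
  obtain ⟨hxa, hya⟩ : x a = 1 ∧ y a = 1 := by
    rw [mul_ne_zero_iff] at ha
    exact ⟨(two _).resolve_left ha.1, (two _).resolve_left ha.2⟩
  rcases two (y i) with hyi | hyi
  · exact ⟨a, i, by rw [hxa, hya, hi, hyi]; decide⟩
  rcases two (x z) with hxz | hxz
  · exact ⟨a, z, by rw [hxa, hya, hxz, hz]; decide⟩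
  · exact ⟨i, z, by rw [hi, hyi, hxz, hz]; decide⟩

theorem exists_swap_even_sum_comp (f : V → α) (w : α → ℕ) {i z : α}
    (hi : Even #{v | f v = i}) (hz : Even (w z)) :
    ∃ p q : α, Even (∑ v, w (Equiv.swap p q (f v))) := by
  simp only [← ZMod.natCast_eq_zero_iff_even, Nat.cast_sum] at hi hz ⊢
  set x : α → ZMod 2 := fun a => (#{v | f v = a} : ZMod 2)
  set y : α → ZMod 2 := fun a => (w a : ZMod 2)
  have hswap := fun p q => sum_swap_comp f y p q
  by_cases h : ∑ v, y (f v) = 0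
  · exact ⟨i, i, by simpa [hswap] using h⟩
  have h1 : ∑ v, y (f v) = 1 := (by decide : ∀ t : ZMod 2, t ≠ 0 → t = 1) _ h
  rw [sum_comp_eq_sum_card_fiber_nsmul f] at h
  obtain ⟨a, -, ha⟩ := exists_ne_zero_of_sum_ne_zero h
  rw [nsmul_eq_mul] at ha
  obtain ⟨p, q, hpq⟩ := ZMod.exists_sub_mul_sub_eq_one x y ha hi hz
  exact ⟨p, q, by rw [hswap, h1, hpq]; decide⟩

end

theorem stmt_11_general {V : Type*} [Fintype V] (G : SimpleGraph V)
    (n : ℕ)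
    (heven : ∃ C : G.Coloring (Fin n), ∃ i : Fin n, Even (C.colorClass i).ncard) :
    ∃ f : V → Fin n, (∀ ⦃u w : V⦄, G.Adj u w → f u ≠ f w) ∧
      Even (∑ v : V, (f v : ℕ)) := by
  classical
  obtain ⟨C, i, hi⟩ := heven
  have hclass : Even #{v | C v = i} := by
    rwa [SimpleGraph.Coloring.colorClass, Set.ncard_eq_toFinset_card', Set.toFinset_ofPred] at hi
  obtain ⟨p, q, hpq⟩ := exists_swap_even_sum_comp C Fin.val (z := ⟨0, i.pos⟩) hclass .zero
  exact ⟨fun v => Equiv.swap p q (C v), fun u w h => (Equiv.swap p q).injective.ne (C.valid h), hpq⟩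

theorem stmt_11 {V : Type*} [Fintype V] (G : SimpleGraph V) (hG : G.Connected)
    (n : ℕ) (hn : G.chromaticNumber = n) (h4 : n % 4 = 2)
    (heven : ∃ C : G.Coloring (Fin n), ∃ i : Fin n, Even (C.colorClass i).ncard) :
    ∃ f : V → Fin n, (∀ ⦃u w : V⦄, G.Adj u w → f u ≠ f w) ∧
      Even (∑ v : V, (f v : ℕ)) :=
  stmt_11_general G n heven
end

section
/- If every proper χ(G)-vertex coloring of a graph G has all color classes of odd size, then every proper χ(G)-vertex coloring of G is complete, i.e., every color class is a maximal independent set. -/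
open Finset

/-! If `v` has no neighbour of color `c ≠ C v`, moving `v` into class `c` gives another proper
coloring with the same colors in which class `c` has grown by one, so the two colorings cannot
both have class `c` odd. -/

namespace SimpleGraph.Coloring

variable {V α : Type*} {G : SimpleGraph V} [DecidableEq V]

def recolor (C : G.Coloring α) (v : V) (c : α) (hc : ∀ u, G.Adj v u → C u ≠ c) :
    G.Coloring α :=
  Coloring.mk (Function.update C v c) fun {a b} hab => by
    by_cases ha : a = v <;> by_cases hb : b = v
    · exact absurd (ha.trans hb.symm) hab.ne
    · subst ha; simpa [hb] using (hc b hab).symm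
    · subst hb; simpa [ha] using hc a hab.symm
    · simpa [ha, hb] using C.valid hab

theorem recolor_apply (C : G.Coloring α) (v : V) (c : α) (hc : ∀ u, G.Adj v u → C u ≠ c)
    (u : V) : C.recolor v c hc u = Function.update C v c u :=
  rfl

theorem colorClass_recolor (C : G.Coloring α) (v : V) (c : α)
    (hc : ∀ u, G.Adj v u → C u ≠ c) :
    (C.recolor v c hc).colorClass c = insert v (C.colorClass c) := by
  ext u
  by_cases hu : u = v <;> simp [recolor_apply, colorClass, hu]

theorem ncard_colorClass_recolor [Finite V] (C : G.Coloring α) (v : V) (c : α)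
    (hc : ∀ u, G.Adj v u → C u ≠ c) (hv : C v ≠ c) :
    ((C.recolor v c hc).colorClass c).ncard = (C.colorClass c).ncard + 1 := by
  rw [colorClass_recolor, Set.ncard_insert_of_notMem (show v ∉ C.colorClass c from hv)]

end SimpleGraph.Coloring

theorem stmt_14_general {V : Type*} [Fintype V] (G : SimpleGraph V)
    (n : ℕ)
    (hodd : ∀ C : G.Coloring (Fin n), ∀ i : Fin n, Odd (C.colorClass i).ncard) :
    ∀ C : G.Coloring (Fin n), ∀ i : Fin n, ∀ v : V,
      C v ≠ i → ∃ u : V, G.Adj v u ∧ C u = i := by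
  classical
  intro C i v hvi
  by_contra! hfree
  have hodd' := hodd (C.recolor v i hfree) i
  rw [C.ncard_colorClass_recolor v i hfree hvi, Nat.odd_add_one] at hodd'
  exact hodd' (hodd C i)

theorem stmt_14 {V : Type*} [Fintype V] (G : SimpleGraph V)
    (n : ℕ) (hn : G.chromaticNumber = n)
    (hodd : ∀ C : G.Coloring (Fin n), ∀ i : Fin n, Odd (C.colorClass i).ncard) :
    ∀ C : G.Coloring (Fin n), ∀ i : Fin n, ∀ v : V,
      C v ≠ i → ∃ u : V, G.Adj v u ∧ C u = i :=
  stmt_14_general G n hodd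
end

section
/- If every proper χ(G)-vertex coloring of a graph G is complete, then every vertex of G has degree at least χ(G) − 1. -/
open Finset

theorem SimpleGraph.Coloring.card_sub_one_le_degree {V α : Type*} {G : SimpleGraph V}
    [Fintype α] [DecidableEq α] (C : G.Coloring α) (v : V) [Fintype (G.neighborSet v)]
    (hv : ∀ i, C v ≠ i → ∃ u, G.Adj v u ∧ C u = i) :
    Fintype.card α - 1 ≤ G.degree v := by
  have hsub : univ.erase (C v) ⊆ (G.neighborFinset v).image C := fun i hi ↦ by
    obtain ⟨u, hadj, rfl⟩ := hv i (ne_of_mem_erase hi).symm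
    exact mem_image_of_mem C ((G.mem_neighborFinset v u).2 hadj)
  calc Fintype.card α - 1 = #(univ.erase (C v)) := by
        rw [card_erase_of_mem (mem_univ _), card_univ]
    _ ≤ #((G.neighborFinset v).image C) := card_le_card hsub
    _ ≤ #(G.neighborFinset v) := card_image_le
    _ = G.degree v := G.card_neighborFinset_eq_degree v

theorem stmt_15_general {V : Type*} [Fintype V] (G : SimpleGraph V)
    [DecidableRel G.Adj]
    (n : ℕ) (hn : G.chromaticNumber = n)
    (hcomp : ∀ C : G.Coloring (Fin n), ∀ i : Fin n, ∀ v : V,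
      C v ≠ i → ∃ u : V, G.Adj v u ∧ C u = i) :
    ∀ v : V, n - 1 ≤ G.degree v := by
  obtain ⟨C⟩ : G.Colorable n := by rw [← SimpleGraph.chromaticNumber_le_iff_colorable, hn]
  intro v
  simpa using C.card_sub_one_le_degree v (hcomp C · v)

theorem stmt_15 {V : Type*} [Fintype V] [DecidableEq V] (G : SimpleGraph V)
    [DecidableRel G.Adj]
    (n : ℕ) (hn : G.chromaticNumber = n)
    (hcomp : ∀ C : G.Coloring (Fin n), ∀ i : Fin n, ∀ v : V,
      C v ≠ i → ∃ u : V, G.Adj v u ∧ C u = i) :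
    ∀ v : V, n - 1 ≤ G.degree v :=
  stmt_15_general G n hn hcomp
end

section
/- Let G be a graph of maximum degree at most k−1 with χ(G) = k ≥ 4. Then every proper k-vertex coloring of G has all color classes of odd size if and only if G is the disjoint union of an odd number of k-cliques. -/
open Finset

/-! If every proper `k`-coloring has only odd color classes, no vertex can be recolored on its
own, since that would change the parity of a class; so every color appears on each closed
neighbourhood `N[u]`, and as `|N[u]| ≤ k` the coloring is injective on `N[u]` and `|N[u]| = k`.
If two neighbours `v₁, v₂` of `u` were non-adjacent, swapping the colors of `v₁` and of its
unique neighbour colored `C v₂` would give a coloring that repeats a color on `N[u]`. Hence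
`N[u]` is a `k`-clique, closed under adjacency, i.e. a component. Conversely, when every
component is a `k`-clique each color class has exactly one vertex per component. -/

namespace SimpleGraph

variable {V α : Type*} {G : SimpleGraph V}

theorem Coloring.exists_recolor (C : G.Coloring α) {u : V} {j : α}
    (hj : ∀ w, G.Adj u w → C w ≠ j) : ∃ C' : G.Coloring α, C' u = j ∧ ∀ v ≠ u, C' v = C v := by
  classical
  refine ⟨Coloring.mk (Function.update C u j) fun {x y} hxy => ?_,
    by simp [Coloring.mk], fun v hv => by simp [Coloring.mk, hv]⟩
  have := C.valid hxy
  have := hxy.symm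
  simp only [Function.update_apply]
  split_ifs <;> grind

/-- Kempe swap along the two-vertex `{C x, C w}`-chain `{x, w}`. -/
theorem Coloring.exists_swap (C : G.Coloring α) {x w : V}
    (hx : ∀ z, G.Adj x z → C z = C w → z = w) (hw : ∀ z, G.Adj w z → C z = C x → z = x) :
    ∃ C' : G.Coloring α, C' x = C w ∧ ∀ v, v ≠ x → v ≠ w → C' v = C v := by
  classical
  refine ⟨Coloring.mk (C ∘ Equiv.swap x w) fun {y z} hyz => ?_, by simp [Coloring.mk],
    fun v hvx hvw => by simp [Coloring.mk, Equiv.swap_apply_of_ne_of_ne hvx hvw]⟩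
  have := C.valid hyz
  have := hyz.symm
  simp only [Function.comp_apply, Equiv.swap_apply_def]
  split_ifs <;> grind

theorem Coloring.injOn_of_isClique (C : G.Coloring α) {s : Set V} (hs : G.IsClique s) :
    Set.InjOn C s :=
  fun _ hx _ hy hxy => by_contra fun hne => C.valid (hs hx hy hne) hxy

theorem ncard_neighborSet (u : V) [Fintype (G.neighborSet u)] :
    (G.neighborSet u).ncard = G.degree u := by
  rw [← card_neighborSet_eq_degree, Set.ncard_eq_toFinset_card', Set.toFinset_card]

theorem ncard_insert_neighborSet (u : V) [Fintype (G.neighborSet u)] :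
    (insert u (G.neighborSet u)).ncard = G.degree u + 1 := by
  rw [Set.ncard_insert_of_notMem G.notMem_neighborSet_self, ncard_neighborSet]

theorem IsClique.neighborSet_subset {s : Set V} (hs : G.IsClique s) {x : V}
    (hx : x ∈ s) [Fintype (G.neighborSet x)] (hdeg : G.degree x < s.ncard) :
    G.neighborSet x ⊆ s := by
  have hsub : s \ {x} ⊆ G.neighborSet x := fun y ⟨hy, hyx⟩ => hs hx hy (Ne.symm hyx)
  have hle : (G.neighborSet x).ncard ≤ (s \ {x}).ncard := by
    rw [Set.ncard_sdiff_singleton_of_mem hx, ncard_neighborSet]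
    omega
  rw [← Set.eq_of_subset_of_ncard_le hsub hle]
  exact Set.sdiff_subset

theorem ConnectedComponent.supp_eq_of_isClique {s : Set V} {u : V} (hu : u ∈ s)
    (hs : G.IsClique s) (hclosed : ∀ x ∈ s, G.neighborSet x ⊆ s) :
    (G.connectedComponentMk u).supp = s := by
  ext v
  rw [ConnectedComponent.mem_supp_iff, ConnectedComponent.eq, reachable_comm,
    reachable_iff_reflTransGen]
  refine ⟨fun h => ?_, fun hv => ?_⟩
  · induction h with
    | refl => exact hu
    | tail _ hxy ih => exact hclosed _ ih hxy
  · rcases eq_or_ne u v with rfl | huv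
    · exact .refl
    · exact .single (hs hu hv huv)

def AllColorClassesOdd (G : SimpleGraph V) (α : Type*) : Prop :=
  ∀ (C : G.Coloring α) (i : α), Odd (C.colorClass i).ncard

namespace AllColorClassesOdd

variable [Finite V]

theorem exists_adj_eq (h : G.AllColorClassesOdd α) (C : G.Coloring α) {u : V} {j : α}
    (hj : C u ≠ j) : ∃ w, G.Adj u w ∧ C w = j := by
  by_contra! hnbr
  obtain ⟨C', hC'u, hC'⟩ := C.exists_recolor hnbr
  have hclass : C'.colorClass j = insert u (C.colorClass j) := by
    ext v
    rcases eq_or_ne v u with rfl | hvu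
    · simp [Coloring.colorClass, hC'u]
    · simp [Coloring.colorClass, hC' v hvu, hvu]
  have hodd := h C' j
  rw [hclass, Set.ncard_insert_of_notMem (show u ∉ C.colorClass j from hj),
    Nat.odd_add_one] at hodd
  exact hodd (h C j)

theorem image_insert_neighborSet_eq_univ (h : G.AllColorClassesOdd α) (C : G.Coloring α)
    (u : V) : C '' insert u (G.neighborSet u) = Set.univ := by
  refine Set.eq_univ_of_forall fun j => ?_
  rcases eq_or_ne (C u) j with rfl | hj
  · exact ⟨u, Set.mem_insert u _, rfl⟩
  · obtain ⟨w, hw, rfl⟩ := h.exists_adj_eq C hj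
    exact ⟨w, Set.mem_insert_of_mem u hw, rfl⟩

variable [G.LocallyFinite]

theorem degree_add_one_eq (h : G.AllColorClassesOdd α) (C : G.Coloring α)
    (hdeg : ∀ v, G.degree v < Nat.card α) (u : V) :
    G.degree u + 1 = Nat.card α := by
  have : Nat.card α ≤ G.degree u + 1 := calc
    Nat.card α = (C '' insert u (G.neighborSet u)).ncard := by
      rw [h.image_insert_neighborSet_eq_univ C, Set.ncard_univ]
    _ ≤ (insert u (G.neighborSet u)).ncard := Set.ncard_image_le
    _ = G.degree u + 1 := G.ncard_insert_neighborSet u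
  exact le_antisymm (hdeg u) this

theorem injOn_insert_neighborSet (h : G.AllColorClassesOdd α) (C : G.Coloring α)
    (hdeg : ∀ v, G.degree v < Nat.card α) (u : V) :
    Set.InjOn C (insert u (G.neighborSet u)) :=
  Set.injOn_of_ncard_image_eq <| by
    rw [h.image_insert_neighborSet_eq_univ C, Set.ncard_univ, G.ncard_insert_neighborSet,
      h.degree_add_one_eq C hdeg]

theorem isClique_insert_neighborSet (h : G.AllColorClassesOdd α) (C : G.Coloring α)
    (hdeg : ∀ v, G.degree v < Nat.card α) (u : V) :
    G.IsClique (insert u (G.neighborSet u)) := by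
  refine isClique_insert.2 ⟨fun v₁ h₁ v₂ h₂ hne => ?_, fun v hv _ => hv⟩
  by_contra hnadj
  have hinj := h.injOn_insert_neighborSet (hdeg := hdeg)
  have hab : C v₁ ≠ C v₂ := fun hab =>
    hne (hinj C u (Set.mem_insert_of_mem u h₁) (Set.mem_insert_of_mem u h₂) hab)
  obtain ⟨w, hw, hwb⟩ := h.exists_adj_eq C hab
  obtain ⟨C', hC'v₁, hC'⟩ := C.exists_swap (x := v₁) (w := w)
    (fun z hz hzw => hinj C v₁ (Set.mem_insert_of_mem _ hz) (Set.mem_insert_of_mem _ hw) hzw)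
    (fun z hz hzv => hinj C w (Set.mem_insert_of_mem _ hz)
      (Set.mem_insert_of_mem _ hw.symm) hzv)
  have hC'v₂ : C' v₂ = C v₂ := hC' v₂ (Ne.symm hne) (by rintro rfl; exact hnadj hw)
  exact hne (hinj C' u (Set.mem_insert_of_mem u h₁) (Set.mem_insert_of_mem u h₂)
    (by rw [hC'v₁, hC'v₂, hwb]))

theorem isClique_supp_and_ncard_eq (h : G.AllColorClassesOdd α) (C : G.Coloring α)
    (hdeg : ∀ v, G.degree v < Nat.card α) (c : G.ConnectedComponent) :
    G.IsClique c.supp ∧ c.supp.ncard = Nat.card α := by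
  obtain ⟨u, rfl⟩ := c.exists_rep
  have hclique := h.isClique_insert_neighborSet C hdeg u
  have hcard : (insert u (G.neighborSet u)).ncard = Nat.card α := by
    rw [G.ncard_insert_neighborSet, h.degree_add_one_eq C hdeg]
  have hsupp : (G.connectedComponentMk u).supp = insert u (G.neighborSet u) :=
    ConnectedComponent.supp_eq_of_isClique (Set.mem_insert u _) hclique fun x hx =>
      hclique.neighborSet_subset hx (hcard ▸ hdeg x)
  exact hsupp ▸ ⟨hclique, hcard⟩

end AllColorClassesOdd

theorem ncard_colorClass_eq_card_connectedComponent [Finite α]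
    (hcomp : ∀ c : G.ConnectedComponent, G.IsClique c.supp ∧ c.supp.ncard = Nat.card α)
    (C : G.Coloring α) (i : α) :
    (C.colorClass i).ncard = Nat.card G.ConnectedComponent := by
  rw [← Nat.card_coe_set_eq]
  refine Nat.card_eq_of_bijective (fun v => G.connectedComponentMk v.1) ⟨?_, fun c => ?_⟩
  · rintro ⟨v, hv⟩ ⟨w, hw⟩ hvw
    have hw' : w ∈ (G.connectedComponentMk v).supp :=
      (congrArg ConnectedComponent.supp hvw).symm ▸ rfl
    exact Subtype.ext <| C.injOn_of_isClique (hcomp _).1 rfl hw' (hv.trans hw.symm)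
  · have himage : C '' c.supp = Set.univ := by
      refine Set.eq_of_subset_of_ncard_le (Set.subset_univ _) ?_
      rw [Set.ncard_univ, (C.injOn_of_isClique (hcomp c).1).ncard_image, (hcomp c).2]
    obtain ⟨v, hv, hvi⟩ := himage.symm ▸ Set.mem_univ i
    exact ⟨⟨v, hvi⟩, hv⟩

end SimpleGraph

open SimpleGraph in
theorem stmt_16_general {V : Type*} [Fintype V] (G : SimpleGraph V)
    [DecidableRel G.Adj]
    (k : ℕ) (hk : 4 ≤ k) (hχ : G.chromaticNumber = k)
    (hdeg : ∀ v : V, G.degree v ≤ k - 1) :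
    (∀ C : G.Coloring (Fin k), ∀ i : Fin k, Odd (C.colorClass i).ncard) ↔
      (Odd (Nat.card G.ConnectedComponent) ∧
        ∀ c : G.ConnectedComponent, c.supp.ncard = k ∧
          ∀ u v : V, u ∈ c.supp → v ∈ c.supp → u ≠ v → G.Adj u v) := by
  obtain ⟨C⟩ : G.Colorable k := chromaticNumber_le_iff_colorable.1 hχ.le
  have hdeg' : ∀ v, G.degree v < Nat.card (Fin k) := fun v => by
    have := hdeg v
    rw [Nat.card_fin]
    omega
  refine ⟨fun hodd => ?_, fun ⟨hodd, hcomp⟩ C i => ?_⟩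
  · have hcomp := AllColorClassesOdd.isClique_supp_and_ncard_eq hodd C hdeg'
    refine ⟨?_, fun c => ⟨by rw [(hcomp c).2, Nat.card_fin],
      fun u v hu hv => (hcomp c).1 hu hv⟩⟩
    rw [← ncard_colorClass_eq_card_connectedComponent hcomp C ⟨0, by omega⟩]
    exact hodd C _
  · rw [ncard_colorClass_eq_card_connectedComponent
      (fun c => ⟨fun u hu v hv => (hcomp c).2 u v hu hv, by rw [(hcomp c).1, Nat.card_fin]⟩) C i]
    exact hodd

theorem stmt_16 {V : Type*} [Fintype V] [DecidableEq V] (G : SimpleGraph V)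
    [DecidableRel G.Adj]
    (k : ℕ) (hk : 4 ≤ k) (hχ : G.chromaticNumber = k)
    (hdeg : ∀ v : V, G.degree v ≤ k - 1) :
    (∀ C : G.Coloring (Fin k), ∀ i : Fin k, Odd (C.colorClass i).ncard) ↔
      (Odd (Nat.card G.ConnectedComponent) ∧
        ∀ c : G.ConnectedComponent, c.supp.ncard = k ∧
          ∀ u v : V, u ∈ c.supp → v ∈ c.supp → u ≠ v → G.Adj u v) :=
  stmt_16_general G k hk hχ hdeg
end

section
/- Let G be a split graph whose vertex set partitions into a maximum clique K of size k = χ(G) and an independent set S of size s, with S nonempty. Then every proper k-vertex coloring of G has all color classes of odd size if and only if every vertex of S has degree exactly k−1 and every vertex of K has degree of parity opposite to that of k + s. -/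
open Finset

/-!
Fix a `k`-coloring `C`. Since `K` is a clique of size `k`, `C` is a bijection from `K` onto the
colors. If every `v ∈ S` has degree `k - 1`, its unique non-neighbour `u ∈ K` carries the only color
left for `v`; hence the class of `C u` is exactly the set of non-neighbours of `u`, of size
`k + |S| - deg u`, and its parity is the stated condition. Conversely, if some `v ∈ S` had degree
below `k - 1`, a color would be missing around `v`, and recoloring `v` with it changes the parity
of its old class.
-/

namespace SimpleGraph

variable {V α : Type*} {G : SimpleGraph V}

namespace Coloring

def recolorAt [DecidableEq V] (C : G.Coloring α) (v : V) (c : α)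
    (hc : ∀ w, G.Adj v w → C w ≠ c) : G.Coloring α :=
  Coloring.mk (Function.update C v c) fun {a b} hab => by
    rcases eq_or_ne a v with rfl | ha
    · rw [Function.update_self, Function.update_of_ne (G.ne_of_adj hab).symm]
      exact (hc b hab).symm
    rcases eq_or_ne b v with rfl | hb
    · rw [Function.update_of_ne ha, Function.update_self]
      exact hc a hab.symm
    · rw [Function.update_of_ne ha, Function.update_of_ne hb]
      exact C.valid hab

@[simp]
lemma coe_recolorAt [DecidableEq V] (C : G.Coloring α) (v : V) (c : α)
    (hc : ∀ w, G.Adj v w → C w ≠ c) : ⇑(C.recolorAt v c hc) = Function.update C v c :=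
  rfl

lemma colorClass_recolorAt_self [DecidableEq V] (C : G.Coloring α) {v : V} {c : α}
    (hc : ∀ w, G.Adj v w → C w ≠ c) (hcv : c ≠ C v) :
    (C.recolorAt v c hc).colorClass (C v) = C.colorClass (C v) \ {v} := by
  ext w
  rcases eq_or_ne w v with rfl | hw
  · simp [colorClass, hcv]
  · simp [colorClass, hw]

lemma exists_adj_eq_of_forall_odd [Finite V]
    (hodd : ∀ (C : G.Coloring α) (c : α), Odd (C.colorClass c).ncard)
    (C : G.Coloring α) (v : V) {c : α} (hcv : c ≠ C v) : ∃ w, G.Adj v w ∧ C w = c := by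
  classical
  -- otherwise recoloring `v` with `c` shrinks its class by one
  by_contra! hc
  have hcard := Set.ncard_sdiff_singleton_add_one (C.mem_colorClass v)
  rw [← C.colorClass_recolorAt_self hc hcv] at hcard
  have h₁ := hodd (C.recolorAt v c hc) (C v)
  have h₂ := hodd C (C v)
  rw [← hcard] at h₂
  exact Nat.not_even_iff_odd.mpr h₂ h₁.add_one

lemma card_sub_one_le_degree_of_forall_odd [Fintype V] [DecidableRel G.Adj]
    [Fintype α] [DecidableEq α]
    (hodd : ∀ (C : G.Coloring α) (c : α), Odd (C.colorClass c).ncard)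
    (C : G.Coloring α) (v : V) : Fintype.card α - 1 ≤ G.degree v := by
  have hsub : univ.erase (C v) ⊆ (G.neighborFinset v).image C := fun c hc => by
    obtain ⟨w, hvw, rfl⟩ := C.exists_adj_eq_of_forall_odd hodd v (ne_of_mem_erase hc)
    exact mem_image_of_mem C ((G.mem_neighborFinset v w).mpr hvw)
  calc Fintype.card α - 1 = #(univ.erase (C v)) := by
        rw [card_erase_of_mem (mem_univ _), card_univ]
    _ ≤ #((G.neighborFinset v).image C) := card_le_card hsub
    _ ≤ G.degree v := card_image_le

lemma degree_lt_card_of_isClique_neighborFinset [Fintype V] [DecidableRel G.Adj] [Fintype α]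
    (C : G.Coloring α) {v : V} (hN : G.IsClique (G.neighborFinset v : Set V)) :
    G.degree v < Fintype.card α := by
  classical
  have hclique : G.IsClique (insert v (G.neighborFinset v) : Finset V) := by
    rw [coe_insert, isClique_insert]
    exact ⟨hN, fun w hw _ => (G.mem_neighborFinset v w).mp hw⟩
  have := hclique.card_le_of_coloring C
  rwa [card_insert_of_notMem (G.notMem_neighborFinset_self v)] at this

lemma exists_mem_eq_of_isClique [Fintype α] {K : Finset V} (hK : G.IsClique (K : Set V))
    (hcard : #K = Fintype.card α) (C : G.Coloring α) (c : α) : ∃ u ∈ K, C u = c := by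
  classical
  have hinj : Set.InjOn C K := fun u hu w hw h => by
    by_contra hne
    exact C.valid (hK hu hw hne) h
  have himage : K.image C = univ :=
    eq_univ_of_card _ ((card_image_of_injOn hinj).trans hcard)
  exact mem_image.mp (himage ▸ mem_univ c)

lemma eq_of_forall_adj_of_isClique [Fintype α] {K : Finset V} (hK : G.IsClique (K : Set V))
    (hcard : #K = Fintype.card α) (C : G.Coloring α) {u w : V} (hu : u ∈ K)
    (hw : ∀ x ∈ K, x ≠ u → G.Adj w x) : C w = C u := by
  obtain ⟨x, hx, hxw⟩ := C.exists_mem_eq_of_isClique hK hcard (C w)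
  rcases eq_or_ne x u with rfl | hxu
  · exact hxw.symm
  · exact absurd hxw.symm (C.valid (hw x hx hxu))

lemma ncard_colorClass_add_degree [Fintype V] [DecidableRel G.Adj] (C : G.Coloring α) {v : V}
    (h : ∀ w, ¬ G.Adj v w → C w = C v) :
    (C.colorClass (C v)).ncard + G.degree v = Fintype.card V := by
  have hclass : C.colorClass (C v) = (G.neighborSet v)ᶜ := by
    ext w
    exact ⟨fun hw hvw => C.valid hvw hw.symm, h w⟩
  rw [hclass, ← card_neighborFinset_eq_degree, ← Set.ncard_coe_finset, coe_neighborFinset,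
    Set.ncard_compl_add_ncard, Nat.card_eq_fintype_card]

end Coloring

structure IsSplitPartition (G : SimpleGraph V) (K S : Finset V) : Prop where
  mem_iff_notMem : ∀ v, v ∈ K ↔ v ∉ S
  isClique : G.IsClique (K : Set V)
  isIndepSet : G.IsIndepSet (S : Set V)

namespace IsSplitPartition

variable [Fintype V] {K S : Finset V}

lemma card_add_card (h : G.IsSplitPartition K S) : #K + #S = Fintype.card V := by
  classical
  rw [← card_compl_add_card S]
  congr 2
  ext v
  simp [h.mem_iff_notMem]

lemma neighborFinset_subset [DecidableRel G.Adj] (h : G.IsSplitPartition K S) {v : V}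
    (hv : v ∈ S) : G.neighborFinset v ⊆ K := fun w hw => by
  have hvw := (G.mem_neighborFinset v w).mp hw
  exact (h.mem_iff_notMem w).mpr fun hwS => h.isIndepSet hv hwS (G.ne_of_adj hvw) hvw

lemma forall_adj_of_not_adj [DecidableRel G.Adj] (h : G.IsSplitPartition K S) {v u : V}
    (hv : v ∈ S) (hdeg : G.degree v = #K - 1) (hu : u ∈ K) (hvu : ¬ G.Adj v u) :
    ∀ x ∈ K, x ≠ u → G.Adj v x := by
  classical
  have hN : G.neighborFinset v = K.erase u := by
    refine eq_of_subset_of_card_le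
      (fun w hw => mem_erase.mpr ⟨?_, h.neighborFinset_subset hv hw⟩) ?_
    · rintro rfl
      exact hvu ((G.mem_neighborFinset v w).mp hw)
    · rw [card_erase_of_mem hu, card_neighborFinset_eq_degree, hdeg]
  intro x hx hxu
  rw [← G.mem_neighborFinset, hN]
  exact mem_erase.mpr ⟨hxu, hx⟩

lemma coloring_eq_of_not_adj [DecidableRel G.Adj] (h : G.IsSplitPartition K S) {k : ℕ}
    (hk : #K = k) (hdegS : ∀ v ∈ S, G.degree v = k - 1) (C : G.Coloring (Fin k)) {u w : V}
    (hu : u ∈ K) (huw : ¬ G.Adj u w) : C w = C u := by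
  by_cases hw : w ∈ S
  · exact C.eq_of_forall_adj_of_isClique h.isClique (by simpa using hk) hu
      (h.forall_adj_of_not_adj hw (hk ▸ hdegS w hw) hu fun hwu => huw hwu.symm)
  · by_contra hne
    exact huw (h.isClique hu ((h.mem_iff_notMem w).mpr hw) fun huw' => hne (huw' ▸ rfl))

lemma degree_eq_of_forall_odd [DecidableRel G.Adj] (h : G.IsSplitPartition K S) {k : ℕ}
    (hk : #K = k) (hodd : ∀ (C : G.Coloring (Fin k)) (i : Fin k), Odd (C.colorClass i).ncard)
    (C : G.Coloring (Fin k)) {v : V} (hv : v ∈ S) : G.degree v = k - 1 := by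
  have hlt := C.degree_lt_card_of_isClique_neighborFinset
    (h.isClique.subset (h.neighborFinset_subset hv))
  have hle := C.card_sub_one_le_degree_of_forall_odd hodd v
  rw [Fintype.card_fin] at hlt hle
  omega

end IsSplitPartition

end SimpleGraph

open SimpleGraph

theorem stmt_17_general {V : Type*} [Fintype V] (G : SimpleGraph V)
    [DecidableRel G.Adj]
    (K S : Finset V) (hpart : ∀ v : V, v ∈ K ↔ v ∉ S)
    (hK : ∀ u ∈ K, ∀ w ∈ K, u ≠ w → G.Adj u w)
    (hS : ∀ u ∈ S, ∀ w ∈ S, ¬ G.Adj u w)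
    (k : ℕ) (hk : K.card = k) (hχ : G.chromaticNumber = k) :
    (∀ C : G.Coloring (Fin k), ∀ i : Fin k, Odd (C.colorClass i).ncard) ↔
      ((∀ v ∈ S, G.degree v = k - 1) ∧
        ∀ v ∈ K, ¬ (Even (G.degree v) ↔ Even (k + S.card))) := by
  have hsplit : G.IsSplitPartition K S :=
    ⟨hpart, fun u hu w hw => hK u hu w hw, fun u hu w hw _ => hS u hu w hw⟩
  have hparity (C : G.Coloring (Fin k)) (hdegS : ∀ v ∈ S, G.degree v = k - 1) (u : V)
      (hu : u ∈ K) : Odd (C.colorClass (C u)).ncard ↔ ¬ (Even (G.degree u) ↔ Even (k + #S)) := by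
    have hcard : k + #S = Fintype.card V := hk ▸ hsplit.card_add_card
    rw [hcard, ← C.ncard_colorClass_add_degree fun w =>
      hsplit.coloring_eq_of_not_adj hk hdegS C hu, Nat.even_add, ← Nat.not_even_iff_odd]
    tauto
  obtain ⟨C₀⟩ : G.Colorable k := chromaticNumber_le_iff_colorable.mp hχ.le
  constructor
  · intro hodd
    have hdegS : ∀ v ∈ S, G.degree v = k - 1 := fun v hv =>
      hsplit.degree_eq_of_forall_odd hk hodd C₀ hv
    exact ⟨hdegS, fun u hu => (hparity C₀ hdegS u hu).mp (hodd C₀ _)⟩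
  · rintro ⟨hdegS, hdegK⟩ C i
    obtain ⟨u, hu, rfl⟩ := C.exists_mem_eq_of_isClique hsplit.isClique (by simpa using hk) i
    exact (hparity C hdegS u hu).mpr (hdegK u hu)

theorem stmt_17 {V : Type*} [Fintype V] [DecidableEq V] (G : SimpleGraph V)
    [DecidableRel G.Adj]
    (K S : Finset V) (hpart : ∀ v : V, v ∈ K ↔ v ∉ S)
    (hK : ∀ u ∈ K, ∀ w ∈ K, u ≠ w → G.Adj u w)
    (hS : ∀ u ∈ S, ∀ w ∈ S, ¬ G.Adj u w)
    (k : ℕ) (hk : K.card = k) (hχ : G.chromaticNumber = k)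
    (hSne : S.Nonempty) :
    (∀ C : G.Coloring (Fin k), ∀ i : Fin k, Odd (C.colorClass i).ncard) ↔
      ((∀ v ∈ S, G.degree v = k - 1) ∧
        ∀ v ∈ K, ¬ (Even (G.degree v) ↔ Even (k + S.card))) :=
  stmt_17_general G K S hpart hK hS k hk hχ
end

section
/- For every integer n ≥ 3 with n ≡ 0 (mod 4), the cycle C_n admits an improper twin 2-edge coloring, while for every m ≥ 3 with m ≡ 2 (mod 4), the path P_m admits no improper twin 2-edge coloring (so χ'_it(C_n) = 2 < 3 = χ'_it(P_m), showing χ'_it is not monotone under subgraphs). -/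
open Finset

/-!
Colouring an edge by the sum of weights of its two ends, the twin label of a vertex of the
cycle becomes (in characteristic 2) the sum of the weights of its two neighbours. Weighting the
vertices `≡ 2 (mod 4)` makes that label the parity of the vertex, which properly colours `C_n`
when `4 ∣ n`.

Conversely, every edge contributes twice to the sum of all twin labels, so that sum vanishes in
`ZMod 2`. A proper `ZMod 2`-colouring of `P_{2k}` alternates along the path, so its sum is `k`,
which is `1` when `2k ≡ 2 (mod 4)`.
-/

namespace SimpleGraph

variable {V : Type*} [Fintype V] (G : SimpleGraph V) {k : ℕ}

open scoped Classical in
theorem sum_twinLabel_eq_two_mul (s : Sym2 V → ZMod k) :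
    ∑ v, twinLabel G s v = 2 * ∑ e ∈ G.edgeFinset, s e := by
  unfold twinLabel
  rw [Finset.sum_comm' (t' := G.edgeFinset) (s' := Sym2.toFinset)
    (fun v e => by simp [incidenceSet, and_comm]), Finset.mul_sum]
  refine Finset.sum_congr rfl fun e he => ?_
  rw [Finset.sum_const, Sym2.card_toFinset_of_not_isDiag e (G.not_isDiag_of_mem_edgeFinset he),
    two_nsmul, two_mul]

open scoped Classical in
theorem twinLabel_eq_sum_neighborFinset (s : Sym2 V → ZMod k) (v : V) :
    twinLabel G s v = ∑ w ∈ G.neighborFinset v, s s(v, w) := by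
  refine (Finset.sum_bij (fun w _ => s(v, w)) (fun w hw => ?_) (fun _ _ _ _ h => ?_)
    (fun e he => ?_) fun _ _ => rfl).symm
  · simpa [mem_incidenceSet] using hw
  · exact Sym2.congr_right.mp h
  · obtain ⟨he, hv⟩ := (G.mem_incidenceFinset v e).mp he
    obtain ⟨w, rfl⟩ := Sym2.mem_iff_exists.mp hv
    exact ⟨w, by simpa using he, rfl⟩

end SimpleGraph

open SimpleGraph

def vertexSumColoring {V : Type*} {k : ℕ} (p : V → ZMod k) : Sym2 V → ZMod k :=
  Sym2.lift ⟨fun a b => p a + p b, fun _ _ => add_comm _ _⟩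

theorem twinLabel_cycleGraph_vertexSumColoring {n : ℕ} (p : Fin (n + 3) → ZMod 2)
    (v : Fin (n + 3)) :
    twinLabel (cycleGraph (n + 3)) (vertexSumColoring p) v = p (v - 1) + p (v + 1) := by
  have hne : v - 1 ≠ v + 1 := by
    simp only [ne_eq, sub_eq_iff_eq_add, add_assoc v, left_eq_add]
    exact ne_of_beq_false rfl
  rw [twinLabel_eq_sum_neighborFinset, Finset.sum_congr (s₂ := {v - 1, v + 1})
    (Finset.ext fun w => by simp [← mem_neighborSet, cycleGraph_neighborSet]) fun _ _ => rfl,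
    Finset.sum_pair hne]
  simp only [vertexSumColoring, Sym2.lift_mk]
  ring_nf
  reduce_mod_char

theorem Fin.natCast_val_add_one_of_dvd {n k : ℕ} [NeZero n] (hk : k ∣ n) (v : Fin n) :
    (((v + 1 : Fin n) : ℕ) : ZMod k) = (v : ℕ) + 1 := by
  rw [Fin.val_add, Fin.val_one', Nat.add_mod_mod, ← Nat.cast_add_one,
    ZMod.natCast_eq_natCast_iff', Nat.mod_mod_of_dvd _ hk]

theorem Fin.natCast_val_sub_one_of_dvd {n k : ℕ} [NeZero n] (hk : k ∣ n) (v : Fin n) :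
    (((v - 1 : Fin n) : ℕ) : ZMod k) = (v : ℕ) - 1 := by
  rw [eq_sub_iff_add_eq, ← Fin.natCast_val_add_one_of_dvd hk, sub_add_cancel]

def cycleColoring (n : ℕ) : Sym2 (Fin n) → ZMod 2 :=
  vertexSumColoring fun w => if ((w : ℕ) : ZMod 4) = 2 then 1 else 0

theorem isImproperTwin_cycleColoring {n : ℕ} (hn : 4 ∣ n + 3) :
    IsImproperTwin (cycleGraph (n + 3)) 2 (cycleColoring (n + 3)) := by
  intro u v huv
  have hv : v = u - 1 ∨ v = u + 1 := by
    simpa [← mem_neighborSet, cycleGraph_neighborSet] using huv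
  rcases hv with rfl | rfl <;>
  · simp only [cycleColoring, twinLabel_cycleGraph_vertexSumColoring,
      Fin.natCast_val_add_one_of_dvd hn, Fin.natCast_val_sub_one_of_dvd hn]
    generalize ((u : ℕ) : ZMod 4) = x
    revert x
    decide

theorem sum_range_two_mul_eq_of_succ_ne (g : ℕ → ZMod 2) (k : ℕ)
    (hg : ∀ i, i + 1 < 2 * k → g (i + 1) ≠ g i) :
    ∑ i ∈ Finset.range (2 * k), g i = k := by
  induction k with
  | zero => simp
  | succ k ih =>
    have hpair : g (2 * k) + g (2 * k + 1) = 1 := by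
      have hne := hg (2 * k) (by omega)
      generalize g (2 * k) = a, g (2 * k + 1) = b at hne ⊢
      revert a b
      decide
    rw [mul_add_one, Finset.sum_range_succ, Finset.sum_range_succ, ih fun i hi => hg i (by omega),
      add_assoc, hpair, Nat.cast_add_one]

theorem sum_eq_of_pathGraph_adj_ne {k : ℕ} (ℓ : Fin (2 * k) → ZMod 2)
    (hℓ : ∀ ⦃u v⦄, (pathGraph (2 * k)).Adj u v → ℓ u ≠ ℓ v) : ∑ v, ℓ v = k := by
  let g : ℕ → ZMod 2 := fun i => if h : i < 2 * k then ℓ ⟨i, h⟩ else 0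
  rw [← sum_range_two_mul_eq_of_succ_ne g k fun i hi => ?_, ← Fin.sum_univ_eq_sum_range]
  · simp [g]
  · simp only [g, dif_pos hi, dif_pos (Nat.lt_of_succ_lt hi)]
    exact hℓ (by simp [pathGraph_adj])

theorem stmt_19 :
    (∀ n : ℕ, 3 ≤ n → n % 4 = 0 →
      ∃ s : Sym2 (Fin n) → ZMod 2,
        IsImproperTwin (SimpleGraph.cycleGraph n) 2 s) ∧
    (∀ m : ℕ, 3 ≤ m → m % 4 = 2 →
      ¬ ∃ s : Sym2 (Fin m) → ZMod 2,
        IsImproperTwin (SimpleGraph.pathGraph m) 2 s) := by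
  refine ⟨fun n hn hn4 => ?_, fun m _ hm4 ⟨s, hs⟩ => ?_⟩
  · obtain ⟨n, rfl⟩ : ∃ n', n = n' + 3 := ⟨n - 3, by omega⟩
    exact ⟨cycleColoring (n + 3), isImproperTwin_cycleColoring (Nat.dvd_of_mod_eq_zero hn4)⟩
  · obtain ⟨k, rfl⟩ : ∃ k, m = 2 * k := ⟨m / 2, by omega⟩
    have hsum := sum_twinLabel_eq_two_mul (pathGraph (2 * k)) s
    rw [sum_eq_of_pathGraph_adj_ne _ hs, (by decide : (2 : ZMod 2) = 0), zero_mul,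
      ZMod.natCast_eq_one_iff_odd.mpr (Nat.odd_iff.mpr (by omega))] at hsum
    exact one_ne_zero hsum
end
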